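/- arXiv:2507.02131 — 8 statements merged into one kernel-verified Lean document; each statement's English description precedes it below -/
import Mathlib

section
/- For any class-K function α, any class-K∞ function ρ, and any nonnegative reals a, b, it holds that α(a+b) ≤ α((Id+ρ)(a)) + α((Id+ρ⁻¹)(b)). -/
/-- A class-`K` function: continuous, strictly increasing on `[0,∞)`, and zero at zero. -/
def IsClassK (α : ℝ → ℝ) : Prop :=
  ContinuousOn α (Set.Ici 0) ∧ StrictMonoOn α (Set.Ici 0) ∧ α 0 = 0

/-- A class-`K∞` function: class-`K` and unbounded. -/
def IsClassKInf (α : ℝ → ℝ) : Prop :=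
  IsClassK α ∧ Filter.Tendsto α Filter.atTop Filter.atTop

namespace IsClassK

variable {α : ℝ → ℝ}

theorem monotoneOn (hα : IsClassK α) : MonotoneOn α (Set.Ici 0) :=
  hα.2.1.monotoneOn

theorem nonneg (hα : IsClassK α) {x : ℝ} (hx : 0 ≤ x) : 0 ≤ α x :=
  hα.2.2 ▸ hα.monotoneOn Set.self_mem_Ici hx hx

theorem apply_le_add_of_le_max (hα : IsClassK α) {x y z : ℝ} (hx : 0 ≤ x) (hy : 0 ≤ y)
    (hz : 0 ≤ z) (h : z ≤ max x y) : α z ≤ α x + α y := by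
  rcases le_max_iff.mp h with hzx | hzy
  · linarith [hα.monotoneOn hz hx hzx, hα.nonneg hy]
  · linarith [hα.monotoneOn hz hy hzy, hα.nonneg hx]

end IsClassK

theorem add_le_max_of_leftInverse {ρ ρinv : ℝ → ℝ} {a b : ℝ}
    (hρinv : MonotoneOn ρinv (Set.Ici 0)) (hinv : ρinv (ρ a) = a) (hρa : 0 ≤ ρ a) (hb : 0 ≤ b) :
    a + b ≤ max (a + ρ a) (b + ρinv b) := by
  rcases le_total b (ρ a) with hb_le | hρa_le
  · exact le_max_of_le_left (by linarith)
  · have ha_le : a ≤ ρinv b := hinv ▸ hρinv hρa hb hρa_le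
    exact le_max_of_le_right (by linarith)

/-- Weak triangle inequality: for any class-K function `α`, any class-K∞ function `ρ`
(with inverse `ρinv`, itself class-K∞), and any nonnegative reals `a, b`,
`α (a + b) ≤ α ((Id + ρ) a) + α ((Id + ρ⁻¹) b)`. -/
theorem weak_triangle_inequality (α ρ ρinv : ℝ → ℝ)
    (hα : IsClassK α) (hρ : IsClassKInf ρ) (hρinv : IsClassKInf ρinv)
    (hinv : ∀ r ∈ Set.Ici (0 : ℝ), ρinv (ρ r) = r ∧ ρ (ρinv r) = r)
    (a b : ℝ) (ha : 0 ≤ a) (hb : 0 ≤ b) :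
    α (a + b) ≤ α (a + ρ a) + α (b + ρinv b) := by
  have hρa : 0 ≤ ρ a := hρ.1.nonneg ha
  have hρinvb : 0 ≤ ρinv b := hρinv.1.nonneg hb
  exact hα.apply_le_add_of_le_max (by positivity) (by positivity) (by positivity)
    (add_le_max_of_leftInverse hρinv.1.monotoneOn (hinv a ha).1 hρa hb)
end

section
/- If ω₁, ω₂: ℝⁿ → ℝ are continuous, positive definite with respect to a point χ* (i.e., they vanish at χ* and are strictly positive elsewhere), and radially unbounded (ω_i(χ) → ∞ as ‖χ‖ → ∞), then there exist class-K∞ functions ρ₁, ρ₂ such that ρ₁(ω₂(χ)) ≤ ω₁(χ) ≤ ρ₂(ω₂(χ)) for all χ ∈ ℝⁿ. -/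
open Set Filter Topology MeasureTheory intervalIntegral

section Dilation

variable {h : ℝ → ℝ} {a b s : ℝ}

noncomputable def dilationIntegral (h : ℝ → ℝ) (a b s : ℝ) : ℝ := ∫ u in a..b, h (s * u)

theorem Monotone.intervalIntegrable_comp_mul (hh : Monotone h) (hs : 0 ≤ s) :
    IntervalIntegrable (fun u => h (s * u)) volume a b :=
  (hh.comp (monotone_mul_left_of_nonneg hs)).intervalIntegrable

theorem Monotone.mul_le_dilationIntegral (hh : Monotone h) (hab : a ≤ b) (hs : 0 ≤ s) :
    (b - a) * h (s * a) ≤ dilationIntegral h a b s := by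
  have := integral_mono_on hab intervalIntegrable_const (hh.intervalIntegrable_comp_mul hs)
    fun u hu => hh (mul_le_mul_of_nonneg_left hu.1 hs)
  simpa [dilationIntegral, mul_comm] using this

theorem Monotone.dilationIntegral_le_mul (hh : Monotone h) (hab : a ≤ b) (hs : 0 ≤ s) :
    dilationIntegral h a b s ≤ (b - a) * h (s * b) := by
  have := integral_mono_on hab (hh.intervalIntegrable_comp_mul hs) intervalIntegrable_const
    fun u hu => hh (mul_le_mul_of_nonneg_left hu.2 hs)
  simpa [dilationIntegral, mul_comm] using this

theorem Monotone.monotoneOn_dilationIntegral (hh : Monotone h) (ha : 0 ≤ a) (hab : a ≤ b) :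
    MonotoneOn (dilationIntegral h a b) (Ici 0) := fun _ hs _ ht hst =>
  integral_mono_on hab (hh.intervalIntegrable_comp_mul hs) (hh.intervalIntegrable_comp_mul ht)
    fun _ hu => hh (mul_le_mul_of_nonneg_right hst (ha.trans hu.1))

theorem continuousAt_dilationIntegral (hint : ∀ a b, IntervalIntegrable h volume a b)
    (hs : s ≠ 0) : ContinuousAt (dilationIntegral h a b) s := by
  set F := fun t => ∫ x in (0 : ℝ)..t, h x
  have hF : Continuous F := continuous_primitive hint 0
  have hsubst : ∀ t ≠ 0, t⁻¹ * (F (t * b) - F (t * a)) = dilationIntegral h a b t := by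
    intro t ht
    rw [dilationIntegral, integral_comp_mul_left h ht, smul_eq_mul,
      integral_interval_sub_left (hint _ _) (hint _ _)]
  refine ContinuousAt.congr ?_ ((eventually_ne_nhds hs).mono hsubst)
  exact (continuousAt_inv₀ hs).mul
    ((hF.comp (continuous_mul_const b)).sub (hF.comp (continuous_mul_const a))).continuousAt

end Dilation

theorem continuousOn_Ici_of_continuousWithinAt_zero {f : ℝ → ℝ}
    (h0 : ContinuousWithinAt f (Ici 0) 0) (hpos : ∀ s, 0 < s → ContinuousAt f s) :
    ContinuousOn f (Ici 0) := by
  intro s hs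
  rcases (mem_Ici.1 hs).eq_or_lt with rfl | hs
  · exact h0
  · exact (hpos s hs).continuousWithinAt

theorem isClassK_div_one_add_mul {A : ℝ → ℝ} (hmono : MonotoneOn A (Ici 0)) (hA0 : 0 ≤ A 0)
    (hpos : ∀ s, 0 < s → 0 < A s) (hcont : ∀ s, 0 < s → ContinuousAt A s) :
    IsClassK fun s => s / (1 + s) * A s := by
  have hA_nonneg : ∀ s, 0 ≤ s → 0 ≤ A s := fun s hs => hA0.trans (hmono (mem_Ici.2 le_rfl) hs hs)
  refine ⟨continuousOn_Ici_of_continuousWithinAt_zero ?_ fun s hs => ?_,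
    fun s hs t ht hst => ?_, by simp⟩
  · simp only [ContinuousWithinAt, zero_div, zero_mul]
    have hlim : Tendsto (fun s => s * A 1) (𝓝[≥] 0) (𝓝 0) :=
      ((continuous_mul_const (A 1)).tendsto' 0 0 (zero_mul _)).mono_left nhdsWithin_le_nhds
    refine tendsto_of_tendsto_of_tendsto_of_le_of_le' tendsto_const_nhds hlim ?_ ?_
    · filter_upwards [self_mem_nhdsWithin] with s (hs : 0 ≤ s)
      exact mul_nonneg (by positivity) (hA_nonneg s hs)
    · filter_upwards [Icc_mem_nhdsGE one_pos] with s hs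
      calc s / (1 + s) * A s ≤ s * A s :=
            mul_le_mul_of_nonneg_right (div_le_self hs.1 (by linarith [hs.1])) (hA_nonneg s hs.1)
        _ ≤ s * A 1 := mul_le_mul_of_nonneg_left (hmono hs.1 (mem_Ici.2 zero_le_one) hs.2) hs.1
  · exact (by fun_prop (disch := positivity) : ContinuousAt (fun s : ℝ => s / (1 + s)) s).mul
      (hcont s hs)
  · have hs' : 0 ≤ s := hs
    have hfrac : s / (1 + s) < t / (1 + t) := by
      rw [div_lt_div_iff₀ (by linarith) (by linarith [hs'.trans hst.le])]
      linarith
    calc s / (1 + s) * A s ≤ s / (1 + s) * A t :=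
          mul_le_mul_of_nonneg_left (hmono hs ht hst.le) (by positivity)
      _ < t / (1 + t) * A t := mul_lt_mul_of_pos_right hfrac (hpos t (hs'.trans_lt hst))

theorem isClassK_id_add {B : ℝ → ℝ} (hmono : MonotoneOn B (Ici 0)) (hB0 : B 0 = 0)
    (hcont : ContinuousOn B (Ici 0)) : IsClassK fun s => s + B s :=
  ⟨continuousOn_id.add hcont, fun _ hs _ ht hst => add_lt_add_of_lt_of_le hst (hmono hs ht hst.le),
    by simp [hB0]⟩

theorem exists_classKInf_le {g : ℝ → ℝ} (hg : Monotone g) (hg0 : g 0 = 0)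
    (hpos : ∀ s, 0 < s → 0 < g s) (htop : Tendsto g atTop atTop) :
    ∃ ρ, IsClassKInf ρ ∧ ∀ s, 0 ≤ s → ρ s ≤ g s := by
  have hg_nonneg : ∀ s, 0 ≤ s → 0 ≤ g s := fun s hs => hg0 ▸ hg hs
  set A := dilationIntegral g (1 / 2) 1
  have hA_le : ∀ s, 0 ≤ s → A s ≤ g s / 2 := fun s hs => by
    have := hg.dilationIntegral_le_mul (by norm_num : (1 / 2 : ℝ) ≤ 1) hs
    rw [mul_one] at this
    linarith
  have hA_ge : ∀ s, 0 ≤ s → g (s / 2) / 2 ≤ A s := fun s hs => by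
    have := hg.mul_le_dilationIntegral (by norm_num : (1 / 2 : ℝ) ≤ 1) hs
    rw [← div_eq_mul_one_div] at this
    linarith
  have hA_nonneg : ∀ s, 0 ≤ s → 0 ≤ A s := fun s hs =>
    (div_nonneg (hg_nonneg _ (by positivity)) two_pos.le).trans (hA_ge s hs)
  have hK : IsClassK fun s => s / (1 + s) * A s :=
    isClassK_div_one_add_mul (hg.monotoneOn_dilationIntegral (by norm_num) (by norm_num))
      (hA_nonneg 0 le_rfl) (fun s hs => (half_pos (hpos _ (half_pos hs))).trans_le (hA_ge s hs.le))
      fun s hs => continuousAt_dilationIntegral (fun _ _ => hg.intervalIntegrable) hs.ne'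
  have hbound : ∀ s, 1 ≤ s → g (s / 2) / 4 ≤ s / (1 + s) * A s := fun s hs => by
    have hfrac : 1 / 2 ≤ s / (1 + s) := by
      rw [div_le_div_iff₀ (by norm_num) (by linarith)]; linarith
    calc g (s / 2) / 4 = 1 / 2 * (g (s / 2) / 2) := by ring
      _ ≤ s / (1 + s) * A s := mul_le_mul hfrac (hA_ge s (by linarith))
          (div_nonneg (hg_nonneg _ (by linarith)) two_pos.le) (by positivity)
  have htopρ : Tendsto (fun s => s / (1 + s) * A s) atTop atTop :=
    tendsto_atTop_mono' atTop (eventually_atTop.2 ⟨1, hbound⟩)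
      ((htop.comp (tendsto_id.atTop_div_const two_pos)).atTop_div_const (by norm_num))
  refine ⟨_, ⟨hK, htopρ⟩, fun s hs => ?_⟩
  calc s / (1 + s) * A s ≤ A s :=
        mul_le_of_le_one_left (hA_nonneg s hs) ((div_le_one (by linarith)).2 (by linarith))
    _ ≤ g s := (hA_le s hs).trans (by linarith [hg_nonneg s hs])

theorem exists_classKInf_ge {q : ℝ → ℝ} (hq : Monotone q) (hq0 : q 0 = 0)
    (hqc : ContinuousWithinAt q (Ici 0) 0) :
    ∃ ρ, IsClassKInf ρ ∧ ∀ s, 0 ≤ s → q s ≤ ρ s := by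
  set B := dilationIntegral q 1 2
  have hB_ge : ∀ s, 0 ≤ s → q s ≤ B s := fun s hs => by
    have := hq.mul_le_dilationIntegral one_le_two hs
    norm_num at this
    exact this
  have hB_le : ∀ s, 0 ≤ s → B s ≤ q (s * 2) := fun s hs => by
    have := hq.dilationIntegral_le_mul one_le_two hs
    norm_num at this
    exact this
  have hB_nonneg : ∀ s, 0 ≤ s → 0 ≤ B s := fun s hs => (hq0 ▸ hq hs).trans (hB_ge s hs)
  have hB0 : B 0 = 0 := le_antisymm (by simpa [hq0] using hB_le 0 le_rfl) (hB_nonneg 0 le_rfl)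
  have hcont0 : ContinuousWithinAt B (Ici 0) 0 := by
    have hlim : Tendsto (fun s => q (s * 2)) (𝓝[≥] 0) (𝓝 0) := by
      have := hqc.comp_of_eq (continuous_mul_const (2 : ℝ)).continuousWithinAt
        (fun s (hs : s ∈ Ici (0 : ℝ)) => mem_Ici.2 (mul_nonneg hs two_pos.le)) (zero_mul 2)
      simpa [ContinuousWithinAt, Function.comp_def, hq0] using this
    rw [ContinuousWithinAt, hB0]
    refine tendsto_of_tendsto_of_tendsto_of_le_of_le' tendsto_const_nhds hlim ?_ ?_
    · filter_upwards [self_mem_nhdsWithin] with s hs using hB_nonneg s hs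
    · filter_upwards [self_mem_nhdsWithin] with s hs using hB_le s hs
  have hK : IsClassK fun s => s + B s :=
    isClassK_id_add (hq.monotoneOn_dilationIntegral zero_le_one one_le_two) hB0
      (continuousOn_Ici_of_continuousWithinAt_zero hcont0 fun s hs =>
        continuousAt_dilationIntegral (fun _ _ => hq.intervalIntegrable) hs.ne')
  have htopρ : Tendsto (fun s => s + B s) atTop atTop := by
    refine tendsto_atTop_mono' atTop ?_ tendsto_id
    filter_upwards [eventually_ge_atTop 0] with s hs
    exact le_add_of_nonneg_right (hB_nonneg s hs)
  exact ⟨_, ⟨hK, htopρ⟩, fun s hs => (hB_ge s hs).trans (le_add_of_nonneg_left hs)⟩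

section Envelope

variable {X : Type*} {ω₁ ω₂ : X → ℝ} {s c : ℝ}

-- The inserted `s` keeps the set nonempty when `ω₂ < s` everywhere (`sInf ∅ = 0` in `ℝ`).
noncomputable def lowerEnvelope (ω₁ ω₂ : X → ℝ) (s : ℝ) : ℝ :=
  sInf (insert s (ω₁ '' {x | s ≤ ω₂ x}))

noncomputable def upperEnvelope (ω₁ ω₂ : X → ℝ) (s : ℝ) : ℝ :=
  sSup (insert 0 (ω₁ '' {x | ω₂ x ≤ s}))

theorem bddBelow_lowerEnvelope (h₁ : ∀ x, 0 ≤ ω₁ x) (s : ℝ) :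
    BddBelow (insert s (ω₁ '' {x | s ≤ ω₂ x})) :=
  BddBelow.insert s ⟨0, forall_mem_image.2 fun x _ => h₁ x⟩

theorem le_lowerEnvelope (hcs : c ≤ s) (h : ∀ x, s ≤ ω₂ x → c ≤ ω₁ x) :
    c ≤ lowerEnvelope ω₁ ω₂ s := by
  refine le_csInf (insert_nonempty _ _) ?_
  rintro _ (rfl | ⟨x, hx, rfl⟩)
  exacts [hcs, h x hx]

theorem lowerEnvelope_le (h₁ : ∀ x, 0 ≤ ω₁ x) (x : X) : lowerEnvelope ω₁ ω₂ (ω₂ x) ≤ ω₁ x :=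
  csInf_le (bddBelow_lowerEnvelope h₁ _) (mem_insert_of_mem _ ⟨x, le_refl (ω₂ x), rfl⟩)

theorem monotone_lowerEnvelope (h₁ : ∀ x, 0 ≤ ω₁ x) : Monotone (lowerEnvelope ω₁ ω₂) :=
  fun a _ hab => le_lowerEnvelope ((csInf_le (bddBelow_lowerEnvelope h₁ a) (mem_insert _ _)).trans
    hab) fun x hx => csInf_le (bddBelow_lowerEnvelope h₁ a)
      (mem_insert_of_mem _ ⟨x, hab.trans hx, rfl⟩)

theorem lowerEnvelope_zero (h₁ : ∀ x, 0 ≤ ω₁ x) : lowerEnvelope ω₁ ω₂ 0 = 0 :=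
  le_antisymm (csInf_le (bddBelow_lowerEnvelope h₁ 0) (mem_insert _ _))
    (le_lowerEnvelope le_rfl fun x _ => h₁ x)

theorem upperEnvelope_le (hc : 0 ≤ c) (h : ∀ x, ω₂ x ≤ s → ω₁ x ≤ c) :
    upperEnvelope ω₁ ω₂ s ≤ c := by
  refine csSup_le (insert_nonempty _ _) ?_
  rintro _ (rfl | ⟨x, hx, rfl⟩)
  exacts [hc, h x hx]

end Envelope

section Compactness

variable {X : Type*} [TopologicalSpace X]

theorem isCompact_setOf_le_of_tendsto_cocompact {α : Type*} [LinearOrder α] [TopologicalSpace α]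
    [ClosedIicTopology α] [NoMaxOrder α] {f : X → α} (hf : Continuous f)
    (hlim : Tendsto f (cocompact X) atTop) (c : α) : IsCompact {x | f x ≤ c} := by
  obtain ⟨K, hK, hsub⟩ := mem_cocompact'.1 (hlim (Ioi_mem_atTop c))
  exact hK.of_isClosed_subset (isClosed_Iic.preimage hf) fun x hx => hsub (not_lt.2 hx)

theorem IsCompact.exists_pos_forall_lt_imp_lt {K : Set X} (hK : IsCompact K) {f g : X → ℝ}
    (hf : ContinuousOn f K) (hg : Continuous g) {ε : ℝ} (hpos : ∀ x ∈ K, ε ≤ g x → 0 < f x) :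
    ∃ δ > 0, ∀ x ∈ K, f x < δ → g x < ε := by
  obtain ⟨δ, hδ, hmin⟩ := (hK.inter_right (isClosed_le continuous_const hg)).exists_forall_le'
    (hf.mono inter_subset_left) fun x hx => hpos x hx.1 hx.2
  exact ⟨δ, hδ, fun x hx hfx => not_le.1 fun hgx => (hmin x ⟨hx, hgx⟩).not_gt hfx⟩

variable {ω₁ ω₂ : X → ℝ} {s : ℝ}

theorem lowerEnvelope_pos (h₁c : Continuous ω₁) (h₂c : Continuous ω₂)
    (hK₁ : ∀ c, IsCompact {x | ω₁ x ≤ c}) (hdef : ∀ x, 0 < ω₂ x → 0 < ω₁ x) (hs : 0 < s) :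
    0 < lowerEnvelope ω₁ ω₂ s := by
  obtain ⟨δ, hδ, hsmall⟩ := (hK₁ s).exists_pos_forall_lt_imp_lt h₁c.continuousOn h₂c
    fun x _ hx => hdef x (hs.trans_le hx)
  refine (lt_min hs hδ).trans_le (le_lowerEnvelope (min_le_left _ _) fun x hx => ?_)
  by_contra! hlt
  exact (hsmall x (hlt.trans_le (min_le_left _ _)).le (hlt.trans_le (min_le_right _ _))).not_ge hx

theorem tendsto_lowerEnvelope_atTop (h₂c : Continuous ω₂) (hK₁ : ∀ c, IsCompact {x | ω₁ x ≤ c}) :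
    Tendsto (lowerEnvelope ω₁ ω₂) atTop atTop := by
  refine tendsto_atTop.2 fun M => ?_
  obtain ⟨N, hN⟩ := (hK₁ M).bddAbove_image h₂c.continuousOn
  filter_upwards [eventually_ge_atTop (max M (N + 1))] with s hs
  refine le_lowerEnvelope ((le_max_left _ _).trans hs) fun x hx => ?_
  by_contra! hlt
  have : ω₂ x ≤ N := hN (mem_image_of_mem ω₂ (show x ∈ {x | ω₁ x ≤ M} from hlt.le))
  linarith [le_max_right M (N + 1)]

theorem bddAbove_upperEnvelope (h₁c : Continuous ω₁) (hK₂ : ∀ c, IsCompact {x | ω₂ x ≤ c})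
    (s : ℝ) : BddAbove (insert 0 (ω₁ '' {x | ω₂ x ≤ s})) :=
  ((hK₂ s).bddAbove_image h₁c.continuousOn).insert 0

theorem le_upperEnvelope (h₁c : Continuous ω₁) (hK₂ : ∀ c, IsCompact {x | ω₂ x ≤ c}) (x : X) :
    ω₁ x ≤ upperEnvelope ω₁ ω₂ (ω₂ x) :=
  le_csSup (bddAbove_upperEnvelope h₁c hK₂ _) (mem_insert_of_mem _ ⟨x, le_refl (ω₂ x), rfl⟩)

theorem upperEnvelope_nonneg (h₁c : Continuous ω₁) (hK₂ : ∀ c, IsCompact {x | ω₂ x ≤ c})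
    (s : ℝ) : 0 ≤ upperEnvelope ω₁ ω₂ s :=
  le_csSup (bddAbove_upperEnvelope h₁c hK₂ s) (mem_insert _ _)

theorem monotone_upperEnvelope (h₁c : Continuous ω₁) (hK₂ : ∀ c, IsCompact {x | ω₂ x ≤ c}) :
    Monotone (upperEnvelope ω₁ ω₂) :=
  fun _ b hab => upperEnvelope_le (upperEnvelope_nonneg h₁c hK₂ b) fun x hx =>
    le_csSup (bddAbove_upperEnvelope h₁c hK₂ b) (mem_insert_of_mem _ ⟨x, hx.trans hab, rfl⟩)

theorem upperEnvelope_zero (h₁c : Continuous ω₁) (hK₂ : ∀ c, IsCompact {x | ω₂ x ≤ c})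
    (hdef : ∀ x, 0 < ω₁ x → 0 < ω₂ x) : upperEnvelope ω₁ ω₂ 0 = 0 :=
  le_antisymm (upperEnvelope_le le_rfl fun x hx => not_lt.1 fun h => (hdef x h).not_ge hx)
    (upperEnvelope_nonneg h₁c hK₂ 0)

theorem continuousWithinAt_upperEnvelope_zero (h₁c : Continuous ω₁) (h₂c : Continuous ω₂)
    (hK₂ : ∀ c, IsCompact {x | ω₂ x ≤ c}) (hdef : ∀ x, 0 < ω₁ x → 0 < ω₂ x) :
    ContinuousWithinAt (upperEnvelope ω₁ ω₂) (Ici 0) 0 := by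
  rw [ContinuousWithinAt, upperEnvelope_zero h₁c hK₂ hdef]
  refine tendsto_order.2 ⟨fun a ha => Eventually.of_forall fun s =>
    ha.trans_le (upperEnvelope_nonneg h₁c hK₂ s), fun ε hε => ?_⟩
  obtain ⟨δ, hδ, hsmall⟩ := (hK₂ 1).exists_pos_forall_lt_imp_lt h₂c.continuousOn h₁c
    fun x _ hx => hdef x ((half_pos hε).trans_le hx)
  filter_upwards [Ico_mem_nhdsGE (lt_min hδ one_pos)] with s hs
  refine (upperEnvelope_le (half_pos hε).le fun x hx => (hsmall x ?_ ?_).le).trans_lt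
    (half_lt_self hε)
  · exact hx.trans (hs.2.trans_le (min_le_right _ _)).le
  · exact hx.trans_lt (hs.2.trans_le (min_le_left _ _))

end Compactness

/-- If `ω₁, ω₂ : ℝⁿ → ℝ` are continuous, positive definite with respect to `χ*`, and
radially unbounded, then there are class-K∞ functions `ρ₁, ρ₂` with
`ρ₁(ω₂(χ)) ≤ ω₁(χ) ≤ ρ₂(ω₂(χ))` for all `χ`. -/
theorem sandwich_by_classKInf {n : ℕ}
    (ω₁ ω₂ : EuclideanSpace ℝ (Fin n) → ℝ) (χs : EuclideanSpace ℝ (Fin n))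
    (h₁c : Continuous ω₁) (h₂c : Continuous ω₂)
    (h₁0 : ω₁ χs = 0) (h₂0 : ω₂ χs = 0)
    (h₁p : ∀ χ, χ ≠ χs → 0 < ω₁ χ) (h₂p : ∀ χ, χ ≠ χs → 0 < ω₂ χ)
    (h₁r : Filter.Tendsto ω₁ (Filter.comap norm Filter.atTop) Filter.atTop)
    (h₂r : Filter.Tendsto ω₂ (Filter.comap norm Filter.atTop) Filter.atTop) :
    ∃ ρ₁ ρ₂ : ℝ → ℝ, IsClassKInf ρ₁ ∧ IsClassKInf ρ₂ ∧
      ∀ χ, ρ₁ (ω₂ χ) ≤ ω₁ χ ∧ ω₁ χ ≤ ρ₂ (ω₂ χ) := by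
  rw [comap_norm_atTop, Metric.cobounded_eq_cocompact] at h₁r h₂r
  have hK₁ := isCompact_setOf_le_of_tendsto_cocompact h₁c h₁r
  have hK₂ := isCompact_setOf_le_of_tendsto_cocompact h₂c h₂r
  have h₁nn : ∀ χ, 0 ≤ ω₁ χ := fun χ => by
    rcases eq_or_ne χ χs with rfl | h
    exacts [h₁0.ge, (h₁p χ h).le]
  have h₂nn : ∀ χ, 0 ≤ ω₂ χ := fun χ => by
    rcases eq_or_ne χ χs with rfl | h
    exacts [h₂0.ge, (h₂p χ h).le]
  have hdef₁ : ∀ χ, 0 < ω₂ χ → 0 < ω₁ χ := fun χ hχ => h₁p χ (by rintro rfl; simp [h₂0] at hχ)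
  have hdef₂ : ∀ χ, 0 < ω₁ χ → 0 < ω₂ χ := fun χ hχ => h₂p χ (by rintro rfl; simp [h₁0] at hχ)
  obtain ⟨ρ₁, hρ₁, hρ₁_le⟩ := exists_classKInf_le (monotone_lowerEnvelope h₁nn)
    (lowerEnvelope_zero h₁nn) (fun _ => lowerEnvelope_pos h₁c h₂c hK₁ hdef₁)
    (tendsto_lowerEnvelope_atTop h₂c hK₁)
  obtain ⟨ρ₂, hρ₂, hρ₂_ge⟩ := exists_classKInf_ge (monotone_upperEnvelope h₁c hK₂)
    (upperEnvelope_zero h₁c hK₂ hdef₂) (continuousWithinAt_upperEnvelope_zero h₁c h₂c hK₂ hdef₂)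
  exact ⟨ρ₁, ρ₂, hρ₁, hρ₂, fun χ => ⟨(hρ₁_le _ (h₂nn χ)).trans (lowerEnvelope_le h₁nn χ),
    (le_upperEnvelope h₁c hK₂ χ).trans (hρ₂_ge _ (h₂nn χ))⟩⟩
end

section
/- If a discrete-time system χ(k+1) = f(χ(k), w(k)) on an open set 𝒮 admits a small-disturbance ISS-Lyapunov function, then it is small-disturbance input-to-state stable: there exist a size function 𝒱, d > 0 (possibly ∞), a class-KL function β, and a class-K function γ on [0,d) such that for all inputs w with ‖w‖_∞ < d and all initial states, 𝒱(χ(k)) ≤ β(𝒱(χ(0)), k) + γ(‖w‖_∞) for all k. -/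
/-- A class-`K` function on `[0, d)`. -/
def IsClassKOn (d : ℝ) (γ : ℝ → ℝ) : Prop :=
  ContinuousOn γ (Set.Ico 0 d) ∧ StrictMonoOn γ (Set.Ico 0 d) ∧ γ 0 = 0

/-- A (discrete-time) class-`KL` function `β : ℝ≥0 × ℕ → ℝ≥0`. -/
def IsClassKL (β : ℝ → ℕ → ℝ) : Prop :=
  (∀ k : ℕ, IsClassK (fun r => β r k)) ∧
  ∀ r : ℝ, 0 ≤ r → Antitone (β r) ∧ Filter.Tendsto (β r) Filter.atTop (nhds 0)

/-- A size function for `(S, χ*)`: continuous, positive definite w.r.t. `χ*`, and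
coercive (it blows up along sequences approaching the boundary of `S` or with norms
tending to infinity). -/
def IsSizeFunction {n : ℕ} (S : Set (EuclideanSpace ℝ (Fin n)))
    (χs : EuclideanSpace ℝ (Fin n)) (V : EuclideanSpace ℝ (Fin n) → ℝ) : Prop :=
  ContinuousOn V S ∧ V χs = 0 ∧ (∀ χ ∈ S, χ ≠ χs → 0 < V χ) ∧
  ∀ x : ℕ → EuclideanSpace ℝ (Fin n), (∀ k, x k ∈ S) →
    ((Sᶜ.Nonempty ∧ Filter.Tendsto (fun k => Metric.infDist (x k) Sᶜ)
        Filter.atTop (nhds 0)) ∨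
      Filter.Tendsto (fun k => ‖x k‖) Filter.atTop Filter.atTop) →
    Filter.Tendsto (fun k => V (x k)) Filter.atTop Filter.atTop

open Filter Topology Set

theorem IsClassK.nonneg_s8 {α : ℝ → ℝ} (hα : IsClassK α) {x : ℝ} (hx : 0 ≤ x) : 0 ≤ α x :=
  hα.2.2 ▸ hα.2.1.monotoneOn self_mem_Ici hx hx

theorem IsClassK.isClassKOn {α : ℝ → ℝ} (hα : IsClassK α) (d : ℝ) : IsClassKOn d α :=
  ⟨hα.1.mono Ico_subset_Ici_self, hα.2.1.mono Ico_subset_Ici_self, hα.2.2⟩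

theorem integral_comp_mul_mem_Icc {J : ℝ → ℝ} (hJ : Monotone J) {c : ℝ} (hc : 0 ≤ c) :
    ∫ u in (1 : ℝ)..2, J (c * u) ∈ Icc (J c) (J (2 * c)) := by
  have hint : IntervalIntegrable (fun u => J (c * u)) MeasureTheory.volume 1 2 :=
    (hJ.comp (monotone_mul_left_of_nonneg hc)).intervalIntegrable
  constructor
  · calc J c = ∫ _ in (1 : ℝ)..2, J c := by norm_num
      _ ≤ _ := intervalIntegral.integral_mono_on one_le_two intervalIntegrable_const hint
          fun u hu => hJ (le_mul_of_one_le_right hc hu.1)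
  · calc _ ≤ ∫ _ in (1 : ℝ)..2, J (2 * c) :=
          intervalIntegral.integral_mono_on one_le_two hint intervalIntegrable_const
            fun u hu => hJ (by nlinarith [hu.2])
      _ = J (2 * c) := by norm_num

theorem monotoneOn_integral_comp_mul {J : ℝ → ℝ} (hJ : Monotone J) :
    MonotoneOn (fun c => ∫ u in (1 : ℝ)..2, J (c * u)) (Ici 0) := fun _ hx _ hy hxy =>
  intervalIntegral.integral_mono_on one_le_two
    (hJ.comp (monotone_mul_left_of_nonneg hx)).intervalIntegrable
    (hJ.comp (monotone_mul_left_of_nonneg hy)).intervalIntegrable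
    fun _ hu => hJ (mul_le_mul_of_nonneg_right hxy (zero_le_one.trans hu.1))

theorem continuousOn_integral_comp_mul {J : ℝ → ℝ} (hJ : Monotone J) :
    ContinuousOn (fun c => ∫ u in (1 : ℝ)..2, J (c * u)) (Ioi 0) := by
  have hF : Continuous fun x => ∫ t in (0 : ℝ)..x, J t :=
    intervalIntegral.continuous_primitive (fun _ _ => hJ.intervalIntegrable) 0
  refine ContinuousOn.congr (f := fun c => c⁻¹ * ((∫ t in (0 : ℝ)..c * 2, J t) -
      ∫ t in (0 : ℝ)..c, J t)) ?_ fun c hc => ?_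
  · exact (continuousOn_inv₀.mono fun c hc => ne_of_gt hc).mul
      ((hF.comp (continuous_id.mul continuous_const)).sub hF).continuousOn
  · simp only [intervalIntegral.integral_comp_mul_left J (ne_of_gt hc), mul_one, smul_eq_mul,
      intervalIntegral.integral_interval_sub_left hJ.intervalIntegrable hJ.intervalIntegrable]

/-- The majorant is `c + ⨍_{[c, 2c]} J`; averaging over a dilated interval makes it continuous
for `c > 0`, while `J c ≤ ⨍_{[c, 2c]} J ≤ J (2c)` keeps it continuous at `0`. -/
theorem exists_isClassK_ge_of_monotone {J : ℝ → ℝ} (hJ : Monotone J) (hJ0 : J 0 = 0)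
    (hJc : ContinuousWithinAt J (Ici 0) 0) : ∃ γ, IsClassK γ ∧ ∀ c, 0 ≤ c → J c ≤ γ c := by
  set I : ℝ → ℝ := fun c => ∫ u in (1 : ℝ)..2, J (c * u)
  have hI : ∀ {c}, 0 ≤ c → I c ∈ Icc (J c) (J (2 * c)) := integral_comp_mul_mem_Icc hJ
  have hI0 : I 0 = 0 := by simp [I, hJ0]
  refine ⟨fun c => c + I c, ⟨fun c hc => ?_, fun x hx y hy hxy => ?_, by simp [hI0]⟩,
    fun c hc => by linarith [(hI hc).1]⟩
  · rcases (mem_Ici.1 hc).eq_or_lt with rfl | hc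
    · have hupper : ContinuousWithinAt (fun c => c + J (2 * c)) (Ici 0) 0 :=
        continuousWithinAt_id.add (hJc.comp_of_eq (continuousWithinAt_id.const_mul 2)
          (fun _ hx => mem_Ici.2 (mul_nonneg zero_le_two hx)) (mul_zero 2))
      simp only [ContinuousWithinAt, hI0, hJ0, mul_zero, add_zero] at hupper ⊢
      refine tendsto_of_tendsto_of_tendsto_of_le_of_le' tendsto_const_nhds hupper
        ?_ ?_ <;> filter_upwards [self_mem_nhdsWithin] with x hx
      · linarith [(hI hx).1, hJ hx, mem_Ici.1 hx]
      · linarith [(hI hx).2]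
    · exact (continuousAt_id.add ((continuousOn_integral_comp_mul hJ).continuousAt
        (Ioi_mem_nhds hc))).continuousWithinAt
  · exact add_lt_add_of_lt_of_le hxy (monotoneOn_integral_comp_mul hJ hx hy hxy.le)

theorem exists_isClassK_forall_le {X : Type*} (g : X → ℝ) (A : ℝ → Set X) (hA : Monotone A)
    (hbdd : ∀ c, BddAbove (g '' A c)) (hsmall : ∀ ε > 0, ∃ c > 0, ∀ x ∈ A c, g x ≤ ε) :
    ∃ γ, IsClassK γ ∧ ∀ c, 0 ≤ c → ∀ x ∈ A c, g x ≤ γ c := by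
  set J : ℝ → ℝ := fun c => sSup (insert 0 (g '' A c))
  have hle : ∀ c, ∀ x ∈ A c, g x ≤ J c := fun c x hx =>
    le_csSup ((hbdd c).insert 0) (mem_insert_of_mem _ (mem_image_of_mem g hx))
  have hnonneg : ∀ c, 0 ≤ J c := fun c => le_csSup ((hbdd c).insert 0) (mem_insert _ _)
  have hJ : Monotone J := fun c c' h =>
    csSup_le_csSup ((hbdd c').insert 0) (insert_nonempty _ _)
      (insert_subset_insert (image_mono (hA h)))
  have hsmallJ : ∀ ε > 0, ∃ c > 0, J c ≤ ε := fun ε hε => by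
    obtain ⟨c, hc, hgc⟩ := hsmall ε hε
    refine ⟨c, hc, csSup_le (insert_nonempty _ _) ?_⟩
    rintro _ (rfl | ⟨x, hx, rfl⟩)
    exacts [hε.le, hgc x hx]
  have hJ0 : J 0 = 0 := le_antisymm (le_of_forall_pos_le_add fun ε hε => by
    obtain ⟨c, hc, hJc⟩ := hsmallJ ε hε
    linarith [hJ hc.le]) (hnonneg 0)
  have hJc : ContinuousWithinAt J (Ici 0) 0 := by
    refine tendsto_order.2 ⟨fun a ha => ?_, fun b hb => ?_⟩
    · exact eventually_nhdsWithin_of_forall fun x hx => ha.trans_le (hJ hx)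
    · obtain ⟨c, hc, hJc⟩ := hsmallJ (b / 2) (by linarith)
      filter_upwards [nhdsWithin_le_nhds (Iio_mem_nhds hc)] with x hx
      linarith [hJ hx.le]
  obtain ⟨γ, hγ, hJγ⟩ := exists_isClassK_ge_of_monotone hJ hJ0 hJc
  exact ⟨γ, hγ, fun c hc x hx => (hle c x hx).trans (hJγ c hc)⟩

/-- The inf-convolution `v ↦ inf_{t ≥ 0} (α t + |t - v|)` of `α` with `|·|`. -/
theorem exists_lipschitzWith_minorant {α : ℝ → ℝ} (hα : StrictMonoOn α (Ici 0)) (hα0 : α 0 = 0) :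
    ∃ a : ℝ → ℝ, LipschitzWith 1 a ∧ (∀ v, 0 ≤ a v) ∧ (∀ v, 0 ≤ v → a v ≤ α v) ∧
      ∀ v, 0 < v → 0 < a v := by
  have hαnn : ∀ t, 0 ≤ t → 0 ≤ α t := fun t ht => hα0 ▸ hα.monotoneOn self_mem_Ici ht ht
  set T : ℝ → Set ℝ := fun v => (fun t => α t + |t - v|) '' Ici 0
  have hne : ∀ v, (T v).Nonempty := fun v => (nonempty_Ici (a := (0 : ℝ))).image _
  have hT : ∀ v, ∀ s ∈ T v, 0 ≤ s := by
    rintro v _ ⟨t, ht, rfl⟩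
    exact add_nonneg (hαnn t ht) (abs_nonneg _)
  have hle : ∀ v t, 0 ≤ t → sInf (T v) ≤ α t + |t - v| := fun v t ht =>
    csInf_le ⟨0, hT v⟩ (mem_image_of_mem _ ht)
  refine ⟨fun v => sInf (T v), LipschitzWith.of_le_add fun x y => ?_,
    fun v => le_csInf (hne v) (hT v), fun v hv => by simpa using hle v v hv, fun v hv => ?_⟩
  · rw [← sub_le_iff_le_add]
    refine le_csInf (hne y) ?_
    rintro _ ⟨t, ht, rfl⟩
    linarith [hle x t ht, abs_sub_le t y x, abs_sub_comm x y, Real.dist_eq x y]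
  · -- `α t + |t - v| ≥ α (v / 2)` for `t ≥ v / 2`, and `≥ v / 2` otherwise
    have hpos : 0 < min (α (v / 2)) (v / 2) :=
      lt_min (hα0 ▸ hα self_mem_Ici (le_of_lt (half_pos hv)) (half_pos hv)) (half_pos hv)
    refine hpos.trans_le (le_csInf (hne v) ?_)
    rintro _ ⟨t, ht, rfl⟩
    rcases le_or_gt (v / 2) t with h | h
    · exact (min_le_left _ _).trans (le_add_of_le_of_nonneg
        (hα.monotoneOn (le_of_lt (half_pos hv)) ht h) (abs_nonneg _))
    · have := hαnn t ht
      have : |t - v| = v - t := by rw [abs_of_neg (by linarith)]; ring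
      exact (min_le_right _ _).trans (by linarith)

theorem exists_strictMono_decay {α : ℝ → ℝ} (hα : StrictMonoOn α (Ici 0)) (hα0 : α 0 = 0) :
    ∃ σ : ℝ → ℝ, Continuous σ ∧ StrictMono σ ∧ σ 0 = 0 ∧ (∀ v, 0 < v → σ v < v) ∧
      ∀ v, 0 ≤ v → v - α v ≤ σ v := by
  obtain ⟨a, hlip, hnn, hle, hpos⟩ := exists_lipschitzWith_minorant hα hα0
  have ha0 : a 0 = 0 := le_antisymm (by simpa [hα0] using hle 0 le_rfl) (hnn 0)
  -- halving `a` makes `σ` strictly increasing, as `a` is `1`-Lipschitz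
  refine ⟨fun v => v - a v / 2, continuous_id.sub (hlip.continuous.div_const 2),
    fun u v huv => ?_, by simp [ha0], fun v hv => by linarith [hpos v hv],
    fun v hv => by linarith [hle v hv, hnn v]⟩
  have := hlip.le_add_mul v u
  rw [NNReal.coe_one, one_mul, Real.dist_eq, abs_of_pos (sub_pos.2 huv)] at this
  simp only
  linarith

theorem apply_le_self_of_nonneg {σ : ℝ → ℝ} (h0 : σ 0 = 0) (hlt : ∀ v, 0 < v → σ v < v)
    {v : ℝ} (hv : 0 ≤ v) : σ v ≤ v := by
  rcases hv.eq_or_lt with rfl | hv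
  exacts [h0.le, (hlt v hv).le]

theorem antitone_iterate {σ : ℝ → ℝ} (hmono : Monotone σ) (h0 : σ 0 = 0)
    (hlt : ∀ v, 0 < v → σ v < v) {r : ℝ} (hr : 0 ≤ r) : Antitone fun k => σ^[k] r :=
  antitone_nat_of_succ_le fun k => by
    rw [Function.iterate_succ_apply']
    exact apply_le_self_of_nonneg h0 hlt (Function.iterate_fixed h0 k ▸ hmono.iterate k hr)

theorem tendsto_iterate_nhds_zero {σ : ℝ → ℝ} (hσ : Continuous σ) (hmono : Monotone σ)
    (h0 : σ 0 = 0) (hlt : ∀ v, 0 < v → σ v < v) {r : ℝ} (hr : 0 ≤ r) :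
    Tendsto (fun k => σ^[k] r) atTop (𝓝 0) := by
  have hnn : ∀ k, 0 ≤ σ^[k] r := fun k => Function.iterate_fixed h0 k ▸ hmono.iterate k hr
  have hL := tendsto_atTop_ciInf (antitone_iterate hmono h0 hlt hr)
    ⟨0, by rintro _ ⟨k, rfl⟩; exact hnn k⟩
  -- the limit is a nonnegative fixed point of `σ`
  have hfix := isFixedPt_of_tendsto_iterate hL hσ.continuousAt
  rcases (le_ciInf hnn).eq_or_lt with h | h
  · rwa [← h] at hL
  · exact absurd hfix (hlt _ h).ne

theorem isClassKL_iterate {σ : ℝ → ℝ} (hσ : Continuous σ) (hmono : StrictMono σ) (h0 : σ 0 = 0)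
    (hlt : ∀ v, 0 < v → σ v < v) : IsClassKL fun r k => σ^[k] r :=
  ⟨fun k => ⟨(hσ.iterate k).continuousOn, (hmono.iterate k).strictMonoOn _,
    Function.iterate_fixed h0 k⟩, fun _ hr => ⟨antitone_iterate hmono.monotone h0 hlt hr,
    tendsto_iterate_nhds_zero hσ hmono.monotone h0 hlt hr⟩⟩

theorem le_max_iterate_of_le_max {α : Type*} [LinearOrder α] {σ : α → α} (hσ : Monotone σ)
    {b : α} (hb : σ b ≤ b) {v : ℕ → α} (hv : ∀ k, v (k + 1) ≤ max (σ (v k)) b) :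
    ∀ k, v k ≤ max (σ^[k] (v 0)) b
  | 0 => le_max_left _ _
  | k + 1 => calc
      v (k + 1) ≤ max (σ (v k)) b := hv k
      _ ≤ max (σ (max (σ^[k] (v 0)) b)) b :=
        max_le_max_right b (hσ (le_max_iterate_of_le_max hσ hb hv k))
      _ ≤ max (σ^[k + 1] (v 0)) b := by
        rw [hσ.map_max, Function.iterate_succ_apply']
        exact max_le (max_le_max le_rfl hb) (le_max_right _ _)

theorem IsCompact.exists_pos_forall_lt_imp_dist_lt {X : Type*} [PseudoMetricSpace X] {K : Set X}
    (hK : IsCompact K) {V : X → ℝ} (hV : ContinuousOn V K) {x₀ : X}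
    (hpos : ∀ x ∈ K, x ≠ x₀ → 0 < V x) {δ : ℝ} (hδ : 0 < δ) :
    ∃ η > 0, ∀ x ∈ K, V x < η → dist x x₀ < δ := by
  obtain ⟨η, hη, hle⟩ := (hK.diff (Metric.isOpen_ball (x := x₀) (ε := δ))).exists_forall_le'
    (hV.mono sdiff_subset) fun x hx => hpos x hx.1 fun h => hx.2 (h ▸ Metric.mem_ball_self hδ)
  exact ⟨η, hη, fun x hx hVx => not_le.1 fun h => (hle x ⟨hx, not_lt.2 h⟩).not_gt hVx⟩

namespace IsSizeFunction

variable {n : ℕ} {S : Set (EuclideanSpace ℝ (Fin n))} {χs : EuclideanSpace ℝ (Fin n)}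
  {V : EuclideanSpace ℝ (Fin n) → ℝ}

theorem nonneg_s8 (hV : IsSizeFunction S χs V) {ξ : EuclideanSpace ℝ (Fin n)} (hξ : ξ ∈ S) :
    0 ≤ V ξ := by
  rcases eq_or_ne ξ χs with rfl | h
  exacts [hV.2.1.ge, (hV.2.2.1 ξ hξ h).le]

theorem isClosed_sublevel (hV : IsSizeFunction S χs V) (hS : IsOpen S) (r : ℝ) :
    IsClosed {ξ | ξ ∈ S ∧ V ξ ≤ r} := by
  refine IsSeqClosed.isClosed fun x p hx hxp => ?_
  have hp : p ∈ S := by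
    by_contra hp
    have hdist : Tendsto (fun k => Metric.infDist (x k) Sᶜ) atTop (𝓝 0) :=
      squeeze_zero (fun _ => Metric.infDist_nonneg) (fun _ => Metric.infDist_le_dist_of_mem hp)
        (tendsto_iff_dist_tendsto_zero.1 hxp)
    obtain ⟨k, hk⟩ := ((hV.2.2.2 x (fun k => (hx k).1) (.inl ⟨⟨p, hp⟩, hdist⟩)).eventually_gt_atTop
      r).exists
    exact (hx k).2.not_gt hk
  exact ⟨hp, le_of_tendsto ((hV.1.continuousAt (hS.mem_nhds hp)).tendsto.comp hxp)
    (.of_forall fun k => (hx k).2)⟩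

theorem isBounded_sublevel (hV : IsSizeFunction S χs V) (r : ℝ) :
    Bornology.IsBounded {ξ | ξ ∈ S ∧ V ξ ≤ r} := by
  by_contra hb
  rw [isBounded_iff_forall_norm_le] at hb
  push Not at hb
  choose x hx hxn using fun k : ℕ => hb k
  obtain ⟨k, hk⟩ := ((hV.2.2.2 x (fun k => (hx k).1) (.inr (tendsto_atTop_mono (fun k => (hxn k).le)
    tendsto_natCast_atTop_atTop))).eventually_gt_atTop r).exists
  exact (hx k).2.not_gt hk

theorem isCompact_sublevel (hV : IsSizeFunction S χs V) (hS : IsOpen S) (r : ℝ) :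
    IsCompact {ξ | ξ ∈ S ∧ V ξ ≤ r} :=
  Metric.isCompact_of_isClosed_isBounded (hV.isClosed_sublevel hS r) (hV.isBounded_sublevel r)

variable {F : Type*} [NormedAddCommGroup F]
  {f : EuclideanSpace ℝ (Fin n) → F → EuclideanSpace ℝ (Fin n)}

theorem exists_pos_forall_apply_le (hV : IsSizeFunction S χs V) (hS : IsOpen S) (hχs : χs ∈ S)
    (hf : ContinuousAt (fun p : EuclideanSpace ℝ (Fin n) × F => f p.1 p.2) (χs, 0))
    (heq : f χs 0 = χs) {α : ℝ → ℝ} (hα : StrictMonoOn α (Ici 0)) (hα0 : α 0 = 0) {ε : ℝ}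
    (hε : 0 < ε) :
    ∃ c > 0, ∀ ξ ∈ S, V ξ ≤ 1 → α (V ξ) ≤ c → ∀ μ : F, ‖μ‖ ≤ c → V (f ξ μ) ≤ ε := by
  have hVf : ContinuousAt (fun p : EuclideanSpace ℝ (Fin n) × F => V (f p.1 p.2)) (χs, 0) :=
    ContinuousAt.comp_of_eq (hV.1.continuousAt (hS.mem_nhds hχs)) hf heq
  obtain ⟨δ, hδ, hball⟩ := Metric.continuousAt_iff.1 hVf ε hε
  obtain ⟨η, hη, hnear⟩ := (hV.isCompact_sublevel hS 1).exists_pos_forall_lt_imp_dist_lt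
    (hV.1.mono fun _ h => h.1) (fun ξ hξ => hV.2.2.1 ξ hξ.1) hδ
  obtain ⟨c, hc, hcδ, hcη⟩ : ∃ c > 0, c < δ ∧ c < α η := by
    obtain ⟨c, hc, hcmin⟩ := exists_between (lt_min hδ (hα0 ▸ hα self_mem_Ici hη.le hη))
    exact ⟨c, hc, lt_min_iff.1 hcmin⟩
  refine ⟨c, hc, fun ξ hξ hξ1 hαξ μ hμ => ?_⟩
  have hξη : V ξ < η := (hα.lt_iff_lt (hV.nonneg_s8 hξ) hη.le).1 (hαξ.trans_lt hcη)
  have hdist : dist (ξ, μ) (χs, 0) < δ := by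
    rw [Prod.dist_eq, dist_zero_right]
    exact max_lt (hnear ξ ⟨hξ, hξ1⟩ hξη) (hμ.trans_lt hcδ)
  have := hball hdist
  rw [heq, hV.2.1, Real.dist_eq, sub_zero] at this
  exact (le_abs_self _).trans this.le

theorem bddAbove_image_sublevel_prod [ProperSpace F] (hV : IsSizeFunction S χs V)
    (hS : IsOpen S) (hf : Continuous fun p : EuclideanSpace ℝ (Fin n) × F => f p.1 p.2)
    (hfS : ∀ ξ ∈ S, ∀ μ, f ξ μ ∈ S) (r c : ℝ) :
    BddAbove ((fun p : EuclideanSpace ℝ (Fin n) × F => V (f p.1 p.2)) ''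
      ({ξ | ξ ∈ S ∧ V ξ ≤ r} ×ˢ Metric.closedBall 0 c)) :=
  ((hV.isCompact_sublevel hS r).prod (isCompact_closedBall 0 c)).bddAbove_image
    (hV.1.comp hf.continuousOn fun p hp => hfS p.1 hp.1.1 p.2)

theorem exists_isClassK_gain [ProperSpace F] (hV : IsSizeFunction S χs V) (hS : IsOpen S)
    (hχs : χs ∈ S) (hf : Continuous fun p : EuclideanSpace ℝ (Fin n) × F => f p.1 p.2)
    (hfS : ∀ ξ ∈ S, ∀ μ, f ξ μ ∈ S) (heq : f χs 0 = χs) {α : ℝ → ℝ}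
    (hα : StrictMonoOn α (Ici 0)) (hα0 : α 0 = 0) :
    ∃ γ, IsClassK γ ∧ ∀ c, 0 ≤ c →
      ∀ ξ ∈ S, V ξ ≤ 1 → α (V ξ) ≤ c → ∀ μ : F, ‖μ‖ ≤ c → V (f ξ μ) ≤ γ c := by
  obtain ⟨γ, hγ, hle⟩ := exists_isClassK_forall_le
    (fun p : EuclideanSpace ℝ (Fin n) × F => V (f p.1 p.2))
    (fun c => {p | p.1 ∈ S ∧ V p.1 ≤ 1 ∧ α (V p.1) ≤ c ∧ ‖p.2‖ ≤ c})
    (fun c c' h p hp => ⟨hp.1, hp.2.1, hp.2.2.1.trans h, hp.2.2.2.trans h⟩)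
    (fun c => (hV.bddAbove_image_sublevel_prod hS hf hfS 1 c).mono (image_mono fun _ hp =>
      by exact ⟨⟨hp.1, hp.2.1⟩, mem_closedBall_zero_iff.2 hp.2.2.2⟩))
    fun ε hε => (hV.exists_pos_forall_apply_le hS hχs hf.continuousAt heq hα hα0 hε).imp
      fun _ h => ⟨h.1, fun p hp => h.2 p.1 hp.1 hp.2.1 hp.2.2.1 p.2 hp.2.2.2⟩
  exact ⟨γ, hγ, fun c hc ξ hξ hξ1 hαξ μ hμ => hle c hc (ξ, μ) ⟨hξ, hξ1, hαξ, hμ⟩⟩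

theorem apply_le_max (hV : IsSizeFunction S χs V) {α₁ α₂ σ : ℝ → ℝ}
    (hα₁ : StrictMonoOn α₁ (Ici 0))
    (hdec : ∀ ξ ∈ S, ∀ μ : F, ‖μ‖ ≤ α₁ (V ξ) → V (f ξ μ) - V ξ ≤ -α₂ (V ξ))
    (hσ : ∀ v, 0 ≤ v → v - α₂ v ≤ σ v) {c b : ℝ} (hc : c < α₁ 1)
    (hb : ∀ ξ ∈ S, V ξ ≤ 1 → α₁ (V ξ) ≤ c → ∀ μ : F, ‖μ‖ ≤ c → V (f ξ μ) ≤ b)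
    {ξ : EuclideanSpace ℝ (Fin n)} (hξ : ξ ∈ S) {μ : F} (hμ : ‖μ‖ ≤ c) :
    V (f ξ μ) ≤ max (σ (V ξ)) b := by
  by_cases hsmall : ‖μ‖ ≤ α₁ (V ξ)
  · exact le_max_of_le_left (by linarith [hdec ξ hξ μ hsmall, hσ (V ξ) (hV.nonneg_s8 hξ)])
  · have hαξ : α₁ (V ξ) ≤ c := ((not_le.1 hsmall).trans_le hμ).le
    have hξ1 : V ξ ≤ 1 := (hα₁.le_iff_le (hV.nonneg_s8 hξ) (mem_Ici.2 zero_le_one)).1 (hαξ.trans hc.le)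
    exact le_max_of_le_right (hb ξ hξ hξ1 hαξ μ hμ)

end IsSizeFunction

/-- If the discrete-time system `χ(k+1) = f(χ(k), w(k))` on an open set `S` admits a
small-disturbance ISS-Lyapunov function, then it is small-disturbance input-to-state
stable. -/
theorem small_disturbance_ISS_of_Lyapunov {n m : ℕ}
    (S : Set (EuclideanSpace ℝ (Fin n))) (hSopen : IsOpen S)
    (f : EuclideanSpace ℝ (Fin n) → EuclideanSpace ℝ (Fin m) → EuclideanSpace ℝ (Fin n))
    (hfcont : Continuous fun p : EuclideanSpace ℝ (Fin n) × EuclideanSpace ℝ (Fin m) =>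
      f p.1 p.2)
    (hfS : ∀ ξ ∈ S, ∀ μ : EuclideanSpace ℝ (Fin m), f ξ μ ∈ S)
    (χs : EuclideanSpace ℝ (Fin n)) (hχs : χs ∈ S) (heq : f χs 0 = χs)
    (V : EuclideanSpace ℝ (Fin n) → ℝ) (hV : IsSizeFunction S χs V)
    (α₁ α₂ : ℝ → ℝ) (hα₁ : IsClassK α₁) (hα₂ : IsClassKInf α₂)
    (hdec : ∀ ξ ∈ S, ∀ μ : EuclideanSpace ℝ (Fin m),
      ‖μ‖ ≤ α₁ (V ξ) → V (f ξ μ) - V ξ ≤ -α₂ (V ξ)) :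
    ∃ (d : ℝ) (β : ℝ → ℕ → ℝ) (γ : ℝ → ℝ),
      0 < d ∧ IsClassKL β ∧ IsClassKOn d γ ∧
      ∀ (w : ℕ → EuclideanSpace ℝ (Fin m)) (c : ℝ),
        (∀ k, ‖w k‖ ≤ c) → c < d →
        ∀ χ : ℕ → EuclideanSpace ℝ (Fin n), χ 0 ∈ S →
          (∀ k, χ (k + 1) = f (χ k) (w k)) →
          ∀ k, χ k ∈ S ∧ V (χ k) ≤ β (V (χ 0)) k + γ c := by
  obtain ⟨-, hα₁mono, hα₁0⟩ := hα₁
  obtain ⟨⟨-, hα₂mono, hα₂0⟩, -⟩ := hα₂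
  obtain ⟨γ, hγ, hγle⟩ := hV.exists_isClassK_gain hSopen hχs hfcont hfS heq hα₁mono hα₁0
  obtain ⟨σ, hσc, hσmono, hσ0, hσlt, hσdec⟩ := exists_strictMono_decay hα₂mono hα₂0
  have hβ := isClassKL_iterate hσc hσmono hσ0 hσlt
  refine ⟨α₁ 1, _, γ, hα₁0 ▸ hα₁mono self_mem_Ici (mem_Ici.2 zero_le_one) one_pos, hβ,
    hγ.isClassKOn _, ?_⟩
  intro w c hw hcd χ hχ0 hχ k
  have hc : 0 ≤ c := (norm_nonneg _).trans (hw 0)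
  have hS : ∀ k, χ k ∈ S := fun k => Nat.rec hχ0 (fun k hk => hχ k ▸ hfS _ hk _) k
  have hstep : ∀ k, V (χ (k + 1)) ≤ max (σ (V (χ k))) (γ c) := fun k =>
    hχ k ▸ hV.apply_le_max hα₁mono hdec hσdec hcd (hγle c hc) (hS k) (hw k)
  refine ⟨hS k, (le_max_iterate_of_le_max (v := fun k => V (χ k)) hσmono.monotone
    (apply_le_self_of_nonneg hσ0 hσlt (hγ.nonneg_s8 hc)) hstep k).trans ?_⟩
  exact max_le_add_of_nonneg ((hβ.1 k).nonneg_s8 (hV.nonneg_s8 (hS 0))) (hγ.nonneg_s8 hc)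
end

section
/- Let 𝒥(z) = (z−z*)²/(2(z−1)) on 𝒵 = (1, ∞) with z* = 1 + √2. Then for all z ∈ (1,∞), |𝒥'(z)| ≥ 𝒥(z)/(√2/2 + 2𝒥(z)). -/
/-!
With `a = z - 1` and `t = |a - c|` (here `c = √2`), `𝒥 = t²/(2a)` and `|𝒥'| = t(a + c)/(2a²)`, so
after clearing denominators the estimate becomes `2a²t ≤ (a + c)(ca + 2t²)`. This cubic inequality
follows from `a ≤ t + c` together with `2at ≤ a² + t²`, and holds for every `c > 0`.
-/

/-- The paper's `𝒥` with minimiser `z* = 1 + c`. -/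
noncomputable def kplObjective (c z : ℝ) : ℝ := (z - (1 + c)) ^ 2 / (2 * (z - 1))

theorem hasDerivAt_kplObjective (c : ℝ) {z : ℝ} (hz : z ≠ 1) :
    HasDerivAt (kplObjective c) ((z - 1 - c) * (z - 1 + c) / (2 * (z - 1) ^ 2)) z := by
  have hz' : 2 * (z - 1) ≠ 0 := mul_ne_zero two_ne_zero (sub_ne_zero.2 hz)
  have hnum : HasDerivAt (fun z : ℝ => (z - (1 + c)) ^ 2) (2 * (z - (1 + c))) z := by
    simpa using ((hasDerivAt_id z).sub_const (1 + c)).fun_pow 2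
  have hden : HasDerivAt (fun z : ℝ => 2 * (z - 1)) 2 z := by
    simpa using ((hasDerivAt_id z).sub_const 1).const_mul 2
  refine (hnum.fun_div hden hz').congr_deriv ?_
  field_simp
  ring

theorem two_mul_sq_mul_le {a c t : ℝ} (ha : 0 ≤ a) (hc : 0 ≤ c) (ht : 0 ≤ t) (hact : a ≤ t + c) :
    2 * a ^ 2 * t ≤ (a + c) * (c * a + 2 * t ^ 2) := by
  nlinarith [mul_le_mul_of_nonneg_left hact (mul_nonneg ha ht), two_mul_le_add_sq a t,
    mul_nonneg hc (sq_nonneg t), mul_nonneg (mul_nonneg hc hc) ha]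

theorem kplObjective_div_le_abs_deriv {c z : ℝ} (hc : 0 < c) (hz : 1 < z) :
    kplObjective c z / (c / 2 + 2 * kplObjective c z) ≤ |deriv (kplObjective c) z| := by
  rw [(hasDerivAt_kplObjective c hz.ne').deriv, kplObjective]
  set a := z - 1
  have ha : 0 < a := sub_pos.2 hz
  have hza : z - (1 + c) = a - c := by ring
  set t := |a - c| with ht_def
  have ht : 0 ≤ t := abs_nonneg _
  rw [hza, ← sq_abs, abs_div, abs_mul, abs_of_pos (by positivity : 0 < a + c),
    abs_of_pos (by positivity : 0 < 2 * a ^ 2)]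
  have hJ : t ^ 2 / (2 * a) / (c / 2 + 2 * (t ^ 2 / (2 * a))) = t ^ 2 / (c * a + 2 * t ^ 2) := by
    field_simp
  rw [← ht_def, hJ, div_le_div_iff₀ (by positivity) (by positivity)]
  have hact : a ≤ t + c := by linarith [le_abs_self (a - c)]
  nlinarith [mul_le_mul_of_nonneg_left (two_mul_sq_mul_le ha.le hc.le ht hact) ht]

/-- For `𝒥(z) = (z−z*)²/(2(z−1))` on `(1,∞)` with `z* = 1+√2`, the `K`-PL estimate
`|𝒥'(z)| ≥ 𝒥(z)/(√2/2 + 2𝒥(z))` holds for all `z ∈ (1,∞)`. -/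
theorem example_KPL_estimate :
    ∀ z : ℝ, 1 < z →
      ((z - (1 + Real.sqrt 2)) ^ 2 / (2 * (z - 1))) /
          (Real.sqrt 2 / 2 + 2 * ((z - (1 + Real.sqrt 2)) ^ 2 / (2 * (z - 1)))) ≤
        |deriv (fun z : ℝ => (z - (1 + Real.sqrt 2)) ^ 2 / (2 * (z - 1))) z| :=
  fun _ hz => kplObjective_div_le_abs_deriv (Real.sqrt_pos.2 two_pos) hz
end

section
/- Let 𝒥₂(K) = Tr(P_K), where P_K solves (A−BK)ᵀP_K + P_K(A−BK) + Q + KᵀRK = 0 for K ∈ 𝒢. Then for every K ∈ 𝒢, ‖K‖ ≤ (2‖B‖/λ_min(R))·𝒥₂(K) + (2‖A‖/λ_min(R))^{1/2}·𝒥₂(K)^{1/2}. -/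
/-!
Write `M = A - BK` and `λ = λ_min(R)`. In the Loewner order
`λ KᵀK ≤ KᵀRK = -(MᵀP + PM) - Q ≤ -(MᵀP + PM)`, so
`λ‖K‖² = ‖λ KᵀK‖ ≤ ‖MᵀP + PM‖ ≤ 2‖M‖‖P‖ ≤ 2(‖A‖ + ‖B‖‖K‖) Tr P`, where `‖P‖ ≤ Tr P` because
`P ⪰ 0`. Solving this quadratic inequality for `‖K‖` gives the bound.
-/

open Matrix
open scoped Matrix.Norms.L2Operator

/-- A real square matrix is Hurwitz if all of its (complex) eigenvalues have
strictly negative real part. -/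
def Hurwitz {n : ℕ} (A : Matrix (Fin n) (Fin n) ℝ) : Prop :=
  ∀ μ ∈ spectrum ℂ (A.map (Complex.ofReal)), μ.re < 0

open scoped MatrixOrder ComplexOrder

namespace Matrix
variable {𝕜 n : Type*} [RCLike 𝕜] [Fintype n] [DecidableEq n]

lemma re_inner_toEuclideanLin_algebraMap_sub (A : Matrix n n 𝕜) (c : ℝ) (x : EuclideanSpace 𝕜 n) :
    RCLike.re (inner 𝕜 (toEuclideanLin (algebraMap ℝ (Matrix n n 𝕜) c - A) x) x) =
      c * ‖x‖ ^ 2 - RCLike.re (inner 𝕜 (toEuclideanLin A x) x) := by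
  rw [IsScalarTower.algebraMap_apply ℝ 𝕜, Algebra.algebraMap_eq_smul_one, map_sub, map_smul,
    LinearMap.sub_apply, LinearMap.smul_apply, inner_sub_left, inner_smul_left]
  simp [toLpLin_one, inner_self_eq_norm_sq_to_K]

lemma IsHermitian.le_algebraMap_iff_re_inner_le {A : Matrix n n 𝕜} (hA : A.IsHermitian) (c : ℝ) :
    A ≤ algebraMap ℝ (Matrix n n 𝕜) c ↔
      ∀ x, RCLike.re (inner 𝕜 (toEuclideanLin A x) x) ≤ c * ‖x‖ ^ 2 := by
  have hsymm : (toEuclideanLin (algebraMap ℝ (Matrix n n 𝕜) c - A)).IsSymmetric :=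
    isSymmetric_toEuclideanLin_iff.2 ((IsSelfAdjoint.algebraMap _ (.all c)).sub hA)
  rw [le_iff, ← isPositive_toEuclideanLin_iff]
  simp only [LinearMap.IsPositive, hsymm, true_and, re_inner_toEuclideanLin_algebraMap_sub,
    sub_nonneg]

lemma IsHermitian.le_algebraMap_l2_opNorm {A : Matrix n n 𝕜} (hA : A.IsHermitian) :
    A ≤ algebraMap ℝ (Matrix n n 𝕜) ‖A‖ := by
  refine (hA.le_algebraMap_iff_re_inner_le _).2 fun x => ?_
  calc RCLike.re (inner 𝕜 (toEuclideanLin A x) x) ≤ ‖toEuclideanLin A x‖ * ‖x‖ :=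
        (RCLike.re_le_norm _).trans (norm_inner_le_norm _ _)
    _ ≤ ‖A‖ * ‖x‖ * ‖x‖ := by gcongr; exact l2_opNorm_mulVec A x
    _ = ‖A‖ * ‖x‖ ^ 2 := by ring

lemma PosSemidef.l2_opNorm_le_of_le_algebraMap {A : Matrix n n 𝕜} (hA : A.PosSemidef) {c : ℝ}
    (hc : 0 ≤ c) (h : A ≤ algebraMap ℝ (Matrix n n 𝕜) c) : ‖A‖ ≤ c := by
  have hApos := isPositive_toEuclideanLin_iff.2 hA
  rw [← l2_opNorm_toEuclideanCLM,
    (toEuclideanCLM (𝕜 := 𝕜) A).norm_eq_iSup_rayleighQuotient hApos.isSymmetric]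
  refine ciSup_le fun x => ?_
  have h1 := hApos.re_inner_nonneg_left x
  have h2 := (hA.1.le_algebraMap_iff_re_inner_le c).1 h x
  rw [ContinuousLinearMap.rayleighQuotient, ContinuousLinearMap.reApplyInnerSelf_apply,
    abs_of_nonneg (by positivity)]
  exact div_le_of_le_mul₀ (sq_nonneg _) hc h2

lemma IsHermitian.algebraMap_iInf_eigenvalues_le {A : Matrix n n 𝕜} (hA : A.IsHermitian) :
    algebraMap ℝ (Matrix n n 𝕜) (⨅ i, hA.eigenvalues i) ≤ A := by
  refine algebraMap_le_of_le_spectrum (fun x hx => ?_) hA.isSelfAdjoint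
  rw [hA.spectrum_real_eq_range_eigenvalues] at hx
  obtain ⟨i, rfl⟩ := hx
  exact ciInf_le (Finite.bddBelow_range _) i

lemma PosSemidef.l2_opNorm_le_re_trace {A : Matrix n n 𝕜} (hA : A.PosSemidef) :
    ‖A‖ ≤ RCLike.re A.trace := by
  have htr : RCLike.re A.trace = ∑ i, hA.1.eigenvalues i := by
    simp [hA.1.trace_eq_sum_eigenvalues]
  have heig : ∀ i, 0 ≤ hA.1.eigenvalues i := hA.eigenvalues_nonneg
  rw [htr]
  refine hA.l2_opNorm_le_of_le_algebraMap (Finset.sum_nonneg fun i _ => heig i)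
    (le_algebraMap_of_spectrum_le (fun x hx => ?_) hA.1.isSelfAdjoint)
  rw [hA.1.spectrum_real_eq_range_eigenvalues] at hx
  obtain ⟨i, rfl⟩ := hx
  exact Finset.single_le_sum (fun j _ => heig j) (Finset.mem_univ i)

lemma PosDef.iInf_eigenvalues_pos [Nonempty n] {A : Matrix n n 𝕜} (hA : A.PosDef) :
    0 < ⨅ i, hA.1.eigenvalues i := by
  obtain ⟨i, hi⟩ := exists_eq_ciInf_of_finite (f := hA.1.eigenvalues)
  exact hi ▸ hA.eigenvalues_pos i

omit [DecidableEq n] in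
lemma IsHermitian.iInf_eigenvalues_smul_conjTranspose_mul_self_le {m : Type*} [Fintype m]
    [DecidableEq m] {R : Matrix m m 𝕜} (hR : R.IsHermitian) (K : Matrix m n 𝕜) :
    (⨅ i, hR.eigenvalues i) • (Kᴴ * K) ≤ Kᴴ * R * K := by
  have h := (le_iff.1 hR.algebraMap_iInf_eigenvalues_le).conjTranspose_mul_mul_same K
  rw [le_iff]
  convert h using 1
  simp [Matrix.mul_sub, Matrix.sub_mul, Algebra.algebraMap_eq_smul_one]

end Matrix

lemma le_add_sqrt_of_sq_le_mul_add {t c d : ℝ} (hc : 0 ≤ c) (hd : 0 ≤ d)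
    (h : t ^ 2 ≤ c * t + d) : t ≤ c + √d := by
  by_contra! hlt
  nlinarith [Real.sq_sqrt hd, Real.sqrt_nonneg d]

theorem iInf_eigenvalues_mul_sq_l2_opNorm_le_of_lyapunov {n m : Type*} [Fintype n] [DecidableEq n]
    [Fintype m] [DecidableEq m] {A : Matrix n n ℝ} {B : Matrix n m ℝ} {K : Matrix m n ℝ}
    {Q P : Matrix n n ℝ} {R : Matrix m m ℝ} (hQ : Q.PosSemidef) (hR : R.PosSemidef)
    (hP : P.PosSemidef) (hPeq : (A - B * K)ᵀ * P + P * (A - B * K) + Q + Kᵀ * R * K = 0) :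
    (⨅ i, hR.1.eigenvalues i) * ‖K‖ ^ 2 ≤ 2 * (‖A‖ + ‖B‖ * ‖K‖) * P.trace := by
  set M := A - B * K
  set S := -(Mᵀ * P + P * M)
  have hlam : 0 ≤ ⨅ i, hR.1.eigenvalues i := Real.iInf_nonneg hR.eigenvalues_nonneg
  have hSQ : S - Kᵀ * R * K = Q := by
    rw [← sub_eq_zero, ← neg_eq_zero, ← hPeq]; simp only [S]; abel
  have hKRK : Kᵀ * R * K ≤ S := le_iff.2 (hSQ ▸ hQ)
  have hS : S.IsHermitian := by
    simpa using (le_iff.1 hKRK).1.add (hR.conjTranspose_mul_mul_same K).1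
  have hM : ‖M‖ ≤ ‖A‖ + ‖B‖ * ‖K‖ := (norm_sub_le _ _).trans (by gcongr; exact l2_opNorm_mul _ _)
  calc (⨅ i, hR.1.eigenvalues i) * ‖K‖ ^ 2 = ‖(⨅ i, hR.1.eigenvalues i) • (Kᴴ * K)‖ := by
        rw [norm_smul, Real.norm_of_nonneg hlam, l2_opNorm_conjTranspose_mul_self, sq]
    _ ≤ ‖S‖ := ((posSemidef_conjTranspose_mul_self K).smul hlam).l2_opNorm_le_of_le_algebraMap
        (norm_nonneg _) (((hR.1.iInf_eigenvalues_smul_conjTranspose_mul_self_le K).trans hKRK).trans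
          hS.le_algebraMap_l2_opNorm)
    _ ≤ ‖Mᵀ‖ * ‖P‖ + ‖P‖ * ‖M‖ := by
        rw [norm_neg]
        exact (norm_add_le _ _).trans (add_le_add (l2_opNorm_mul _ _) (l2_opNorm_mul _ _))
    _ = 2 * ‖M‖ * ‖P‖ := by
        rw [← conjTranspose_eq_transpose_of_trivial, l2_opNorm_conjTranspose]; ring
    _ ≤ 2 * (‖A‖ + ‖B‖ * ‖K‖) * P.trace := by
        gcongr
        simpa using hP.l2_opNorm_le_re_trace

theorem gain_norm_bound_general {n m : ℕ}
    (A : Matrix (Fin n) (Fin n) ℝ) (B : Matrix (Fin n) (Fin m) ℝ)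
    (K : Matrix (Fin m) (Fin n) ℝ)
    (Q : Matrix (Fin n) (Fin n) ℝ) (R : Matrix (Fin m) (Fin m) ℝ)
    (hQ : Q.PosDef) (hR : R.PosDef)
    (P : Matrix (Fin n) (Fin n) ℝ) (hP : P.PosDef)
    (hPeq : (A - B * K)ᵀ * P + P * (A - B * K) + Q + Kᵀ * R * K = 0) :
    ‖K‖ ≤ (2 * ‖B‖ / (⨅ i, hR.1.eigenvalues i)) * P.trace +
      Real.sqrt (2 * ‖A‖ / (⨅ i, hR.1.eigenvalues i)) * Real.sqrt P.trace := by
  have htr : 0 ≤ P.trace := hP.posSemidef.trace_nonneg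
  rcases isEmpty_or_nonempty (Fin m) with hm | hm
  · simp [Subsingleton.elim K 0, Real.iInf_of_isEmpty]
  set lam := ⨅ i, hR.1.eigenvalues i
  have hlam : 0 < lam := hR.iInf_eigenvalues_pos
  have hkey := iInf_eigenvalues_mul_sq_l2_opNorm_le_of_lyapunov hQ.posSemidef hR.posSemidef
    hP.posSemidef hPeq
  rw [← Real.sqrt_mul (by positivity)]
  refine le_add_sqrt_of_sq_le_mul_add (mul_nonneg (by positivity) htr)
    (mul_nonneg (by positivity) htr) ?_
  field_simp
  linarith

/-- For any stabilizing gain `K`, with `𝒥₂(K) = Tr(P_K)` where `P_K` solves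
`(A−BK)ᵀP_K + P_K(A−BK) + Q + KᵀRK = 0`, one has
`‖K‖ ≤ (2‖B‖/λ_min(R))·𝒥₂(K) + (2‖A‖/λ_min(R))^{1/2}·𝒥₂(K)^{1/2}`
(spectral norms). -/
theorem gain_norm_bound {n m : ℕ} [NeZero n] [NeZero m]
    (A : Matrix (Fin n) (Fin n) ℝ) (B : Matrix (Fin n) (Fin m) ℝ)
    (K : Matrix (Fin m) (Fin n) ℝ)
    (Q : Matrix (Fin n) (Fin n) ℝ) (R : Matrix (Fin m) (Fin m) ℝ)
    (hQ : Q.PosDef) (hR : R.PosDef) (hK : Hurwitz (A - B * K))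
    (P : Matrix (Fin n) (Fin n) ℝ) (hP : P.PosDef)
    (hPeq : (A - B * K)ᵀ * P + P * (A - B * K) + Q + Kᵀ * R * K = 0) :
    ‖K‖ ≤ (2 * ‖B‖ / (⨅ i, hR.1.eigenvalues i)) * P.trace +
      Real.sqrt (2 * ‖A‖ / (⨅ i, hR.1.eigenvalues i)) * Real.sqrt P.trace :=
  gain_norm_bound_general A B K Q R hQ hR P hP hPeq
end

section
/- For any stabilizing gain K ∈ 𝒢, with K₊ = R⁻¹Bᵀ P_K, the identity 2⟨K−K*, R(K−K₊)⟩_{Y*} = Tr(P_K − P*) + ⟨K−K*, R(K−K*)⟩_{Y*} holds, where ⟨M,N⟩_{Y*} = Tr(M Y* Nᵀ). -/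
/-!
Completing the square, `(A - BK)ᵀP + P(A - BK) + KᵀRK` is the Riccati operator of `P` plus
`(K - R⁻¹BᵀP)ᵀ R (K - R⁻¹BᵀP)`. Applied to `P_K` at `K` and at `K*`, and to `P*` at `K*`, this
shows that `P_K - P*` solves a Lyapunov equation for the closed loop `A - BK*` whose right-hand
side is `(K* - K₊)ᵀR(K* - K₊) - (K - K₊)ᵀR(K - K₊)`. Pairing with `Y*` turns this into
`Tr(P_K - P*) = ⟨K - K₊, R(K - K₊)⟩_{Y*} - ⟨K* - K₊, R(K* - K₊)⟩_{Y*}`, and polarization with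
`K* - K₊ = (K - K₊) - (K - K*)` gives the identity.
-/

open Matrix

namespace Matrix

variable {ι κ α : Type*} [Fintype ι] [Fintype κ] [CommRing α]

theorem PosDef.isSymm {n R : Type*} [Ring R] [PartialOrder R] [StarRing R] [TrivialStar R]
    {M : Matrix n n R} (hM : M.PosDef) : M.IsSymm :=
  isHermitian_iff_isSymm.mp hM.isHermitian

theorem closedLoop_lyapunov_eq_riccati_add [DecidableEq κ] (A : Matrix ι ι α) (B : Matrix ι κ α)
    {P : Matrix ι ι α} {R : Matrix κ κ α} (hP : P.IsSymm) (hR : R.IsSymm) (hRdet : IsUnit R.det)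
    (K : Matrix κ ι α) :
    (A - B * K)ᵀ * P + P * (A - B * K) + Kᵀ * R * K =
      Aᵀ * P + P * A - P * B * R⁻¹ * Bᵀ * P +
        (K - R⁻¹ * Bᵀ * P)ᵀ * R * (K - R⁻¹ * Bᵀ * P) := by
  set L := R⁻¹ * Bᵀ * P with hL
  have hBP : Bᵀ * P = R * L := by
    rw [hL, Matrix.mul_assoc, ← Matrix.mul_assoc R, mul_nonsing_inv R hRdet, Matrix.one_mul]
  have hPB : P * B = Lᵀ * R := by
    simpa [transpose_mul, hP.eq, hR.eq] using congrArg transpose hBP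
  have hPBP : P * B * R⁻¹ * Bᵀ * P = Lᵀ * R * L := by
    rw [Matrix.mul_assoc, hBP, hPB, Matrix.mul_assoc, ← Matrix.mul_assoc R⁻¹,
      nonsing_inv_mul R hRdet, Matrix.one_mul, Matrix.mul_assoc]
  have hKBP : Kᵀ * Bᵀ * P = Kᵀ * R * L := by rw [Matrix.mul_assoc, hBP, Matrix.mul_assoc]
  have hPBK : P * (B * K) = Lᵀ * R * K := by rw [← Matrix.mul_assoc, hPB]
  simp only [hPBP, transpose_sub, transpose_mul, Matrix.sub_mul, Matrix.mul_sub, hKBP, hPBK]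
  abel

theorem trace_eq_neg_trace_lyapunov_mul [DecidableEq ι] {A Y : Matrix ι ι α}
    (hY : A * Y + Y * Aᵀ + 1 = 0) (M : Matrix ι ι α) :
    M.trace = -((Aᵀ * M + M * A) * Y).trace := by
  have h1 : (1 : Matrix ι ι α) = -(A * Y + Y * Aᵀ) := by
    rw [← sub_eq_zero, sub_neg_eq_add, add_comm, hY]
  conv_lhs => rw [← Matrix.mul_one M, h1]
  rw [Matrix.mul_neg, trace_neg, Matrix.mul_add, Matrix.add_mul, trace_add, trace_add,
    Matrix.mul_assoc, trace_mul_comm Aᵀ, ← Matrix.mul_assoc M A, ← Matrix.mul_assoc M Y, add_comm]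

theorem trace_transpose_mul_mul_mul {R : Matrix κ κ α} (hR : R.IsSymm) (X : Matrix κ ι α)
    (Y : Matrix ι ι α) : (Xᵀ * R * X * Y).trace = (X * Y * (R * X)ᵀ).trace := by
  rw [transpose_mul, hR.eq, Matrix.mul_assoc (Xᵀ * R), trace_mul_comm]

theorem trace_mul_mul_transpose_comm {Y : Matrix ι ι α} {R : Matrix κ κ α} (hY : Y.IsSymm)
    (hR : R.IsSymm) (X Z : Matrix κ ι α) :
    (X * Y * (R * Z)ᵀ).trace = (Z * Y * (R * X)ᵀ).trace := by
  rw [← trace_transpose]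
  simp only [transpose_mul, transpose_transpose, hY.eq, hR.eq, Matrix.mul_assoc]
  rw [trace_mul_comm R]
  simp only [Matrix.mul_assoc]

theorem trace_mul_mul_transpose_sub_sub {Y : Matrix ι ι α} {R : Matrix κ κ α} (hY : Y.IsSymm)
    (hR : R.IsSymm) (X Z : Matrix κ ι α) :
    ((X - Z) * Y * (R * (X - Z))ᵀ).trace =
      (X * Y * (R * X)ᵀ).trace - 2 * (Z * Y * (R * X)ᵀ).trace + (Z * Y * (R * Z)ᵀ).trace := by
  have := trace_mul_mul_transpose_comm hY hR X Z
  simp only [Matrix.mul_sub, Matrix.sub_mul, transpose_sub, trace_sub]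
  linear_combination -this

end Matrix

theorem natural_gradient_trace_identity_general {n m : ℕ}
    (A : Matrix (Fin n) (Fin n) ℝ) (B : Matrix (Fin n) (Fin m) ℝ)
    (Q : Matrix (Fin n) (Fin n) ℝ) (R : Matrix (Fin m) (Fin m) ℝ)
    (hR : R.PosDef)
    (Ps : Matrix (Fin n) (Fin n) ℝ) (hPs : Ps.PosDef)
    (hARE : Aᵀ * Ps + Ps * A + Q - Ps * B * R⁻¹ * Bᵀ * Ps = 0)
    (Ks : Matrix (Fin m) (Fin n) ℝ) (hKs : Ks = R⁻¹ * Bᵀ * Ps)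
    (Ys : Matrix (Fin n) (Fin n) ℝ) (hYs : Ys.PosDef)
    (hYseq : (A - B * Ks) * Ys + Ys * (A - B * Ks)ᵀ + 1 = 0)
    (K : Matrix (Fin m) (Fin n) ℝ)
    (PK : Matrix (Fin n) (Fin n) ℝ) (hPK : PK.PosDef)
    (hPKeq : (A - B * K)ᵀ * PK + PK * (A - B * K) + Q + Kᵀ * R * K = 0) :
    2 * ((K - Ks) * Ys * (R * (K - R⁻¹ * Bᵀ * PK))ᵀ).trace =
      (PK - Ps).trace + ((K - Ks) * Ys * (R * (K - Ks))ᵀ).trace := by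
  have hRdet : IsUnit R.det := hR.det_pos.ne'.isUnit
  have hPK_K := closedLoop_lyapunov_eq_riccati_add A B hPK.isSymm hR.isSymm hRdet K
  have hPK_Ks := closedLoop_lyapunov_eq_riccati_add A B hPK.isSymm hR.isSymm hRdet Ks
  have hPs_Ks := closedLoop_lyapunov_eq_riccati_add A B hPs.isSymm hR.isSymm hRdet Ks
  rw [← hKs, sub_self, transpose_zero, Matrix.zero_mul, Matrix.mul_zero, add_zero] at hPs_Ks
  set Kp := R⁻¹ * Bᵀ * PK
  have hdiff : (A - B * Ks)ᵀ * (PK - Ps) + (PK - Ps) * (A - B * Ks) =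
      (Ks - Kp)ᵀ * R * (Ks - Kp) - (K - Kp)ᵀ * R * (K - Kp) := by
    rw [Matrix.mul_sub, Matrix.sub_mul]
    linear_combination (norm := abel) hPK_Ks - hPK_K + hPKeq - hPs_Ks - hARE
  have htrace : (PK - Ps).trace =
      ((K - Kp) * Ys * (R * (K - Kp))ᵀ).trace - ((Ks - Kp) * Ys * (R * (Ks - Kp))ᵀ).trace := by
    rw [trace_eq_neg_trace_lyapunov_mul hYseq, hdiff, Matrix.sub_mul, trace_sub,
      trace_transpose_mul_mul_mul hR.isSymm, trace_transpose_mul_mul_mul hR.isSymm]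
    ring
  have hpolar := trace_mul_mul_transpose_sub_sub hYs.isSymm hR.isSymm (K - Kp) (K - Ks)
  rw [sub_sub_sub_cancel_left] at hpolar
  linarith

/-- For any stabilizing gain `K`, with `K₊ = R⁻¹Bᵀ P_K`, the identity
`2⟨K−K*, R(K−K₊)⟩_{Y*} = Tr(P_K − P*) + ⟨K−K*, R(K−K*)⟩_{Y*}` holds,
where `⟨M,N⟩_{Y*} = Tr(M Y* Nᵀ)`. -/
theorem natural_gradient_trace_identity {n m : ℕ}
    (A : Matrix (Fin n) (Fin n) ℝ) (B : Matrix (Fin n) (Fin m) ℝ)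
    (Q : Matrix (Fin n) (Fin n) ℝ) (R : Matrix (Fin m) (Fin m) ℝ)
    (hQ : Q.PosDef) (hR : R.PosDef)
    (Ps : Matrix (Fin n) (Fin n) ℝ) (hPs : Ps.PosDef)
    (hARE : Aᵀ * Ps + Ps * A + Q - Ps * B * R⁻¹ * Bᵀ * Ps = 0)
    (Ks : Matrix (Fin m) (Fin n) ℝ) (hKs : Ks = R⁻¹ * Bᵀ * Ps)
    (hKsHur : Hurwitz (A - B * Ks))
    (Ys : Matrix (Fin n) (Fin n) ℝ) (hYs : Ys.PosDef)
    (hYseq : (A - B * Ks) * Ys + Ys * (A - B * Ks)ᵀ + 1 = 0)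
    (K : Matrix (Fin m) (Fin n) ℝ) (hK : Hurwitz (A - B * K))
    (PK : Matrix (Fin n) (Fin n) ℝ) (hPK : PK.PosDef)
    (hPKeq : (A - B * K)ᵀ * PK + PK * (A - B * K) + Q + Kᵀ * R * K = 0) :
    2 * ((K - Ks) * Ys * (R * (K - R⁻¹ * Bᵀ * PK))ᵀ).trace =
      (PK - Ps).trace + ((K - Ks) * Ys * (R * (K - Ks))ᵀ).trace :=
  natural_gradient_trace_identity_general A B Q R hR Ps hPs hARE Ks hKs Ys hYs hYseq K PK hPK hPKeq
end

section
/- For any stabilizing gain K ∈ 𝒢, with K₊ = R⁻¹BᵀP_K, the bound ⟨K−K₊, R(K−K₊)⟩_{Y*} ≤ (1 + ‖Y*‖·‖BR⁻¹Bᵀ‖·Tr(P_K))·Tr(P_K − P*) holds. -/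
/-!
Write `Δ = P_K - P*` and `M = B R⁻¹ Bᵀ`. Subtracting the Riccati equation from the Lyapunov
equation of `K` gives `(A - BK)ᵀ Δ + Δ (A - BK) + (K - K*)ᵀ R (K - K*) = 0`, so `Δ ⪰ 0` because
`A - BK` is Hurwitz. Completing the square in the same two equations gives
`(K - K₊)ᵀ R (K - K₊) = Δ M Δ - ((A - BK*)ᵀ Δ + Δ (A - BK*))`. Pairing with `Y*`, the Lyapunov
equation of `Y*` turns the second term into `Tr Δ`, and `Tr (Δ M Δ Y*) ≤ ‖Y*‖ ‖M‖ Tr (Δ²)` with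
`Tr (Δ²) ≤ Tr P_K · Tr Δ` since `0 ⪯ Δ ⪯ P_K`.

Positivity of Lyapunov solutions is reduced to the discrete-time case by the Cayley transform
`(A + 1)(A - 1)⁻¹`, whose powers tend to zero by Gelfand's formula.
-/

open Matrix
open scoped Matrix.Norms.L2Operator

open Filter Topology

theorem Complex.re_add_one_div_sub_one_nonneg {z : ℂ} (hz : 1 ≤ ‖z‖) :
    0 ≤ ((z + 1) / (z - 1)).re := by
  rw [Complex.div_re, ← add_div]
  refine div_nonneg ?_ (Complex.normSq_nonneg _)
  have hz' : 1 ≤ Complex.normSq z := by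
    rw [Complex.normSq_eq_norm_sq]
    nlinarith
  simp only [Complex.add_re, Complex.sub_re, Complex.one_re, Complex.add_im, Complex.sub_im,
    Complex.one_im, Complex.normSq_apply] at hz' ⊢
  nlinarith

namespace spectrum

theorem norm_lt_one_of_mem_cayley {𝔸 : Type*} [Ring 𝔸] [Algebra ℂ 𝔸] {a b : 𝔸}
    (ha : ∀ μ ∈ spectrum ℂ a, μ.re < 0) (hab : (a - 1) * b = 1) (hba : b * (a - 1) = 1) :
    ∀ z ∈ spectrum ℂ ((a + 1) * b), ‖z‖ < 1 := by
  intro z hz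
  by_contra! hz_ge
  refine mem_iff.mp hz ?_
  have hfactor : algebraMap ℂ 𝔸 z - (a + 1) * b =
      ((z - 1) • a - algebraMap ℂ 𝔸 (z + 1)) * b := by
    calc algebraMap ℂ 𝔸 z - (a + 1) * b = algebraMap ℂ 𝔸 z * ((a - 1) * b) - (a + 1) * b := by
          rw [hab, mul_one]
      _ = ((z - 1) • a - algebraMap ℂ 𝔸 (z + 1)) * b := by
          rw [Algebra.smul_def, map_sub, map_add, map_one]
          noncomm_ring
  rw [hfactor]
  refine IsUnit.mul ?_ ⟨⟨b, a - 1, hba, hab⟩, rfl⟩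
  rcases eq_or_ne z 1 with rfl | hz1
  · rw [sub_self, zero_smul, zero_sub]
    exact ((isUnit_iff_ne_zero.mpr (by norm_num)).map _).neg
  · have hw : IsUnit (algebraMap ℂ 𝔸 ((z + 1) / (z - 1)) - a) := by
      by_contra h
      exact (ha _ (mem_iff.mpr h)).not_ge (Complex.re_add_one_div_sub_one_nonneg hz_ge)
    have hsplit : (z - 1) • a - algebraMap ℂ 𝔸 (z + 1) =
        -((z - 1) • (algebraMap ℂ 𝔸 ((z + 1) / (z - 1)) - a)) := by
      rw [smul_sub, Algebra.smul_def (z - 1) (algebraMap ℂ 𝔸 _), ← map_mul,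
        mul_div_cancel₀ _ (sub_ne_zero.mpr hz1)]
      abel
    rw [hsplit, Algebra.smul_def]
    exact ((isUnit_iff_ne_zero.mpr (sub_ne_zero.mpr hz1)).map _ |>.mul hw).neg

theorem tendsto_pow_atTop_nhds_zero_of_forall_norm_lt_one {𝔸 : Type*} [NormedRing 𝔸]
    [NormedAlgebra ℂ 𝔸] [CompleteSpace 𝔸] {a : 𝔸} (ha : ∀ z ∈ spectrum ℂ a, ‖z‖ < 1) :
    Tendsto (fun k : ℕ => a ^ k) atTop (𝓝 0) := by
  rcases subsingleton_or_nontrivial 𝔸 with h𝔸 | h𝔸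
  · exact tendsto_const_nhds.congr fun k => Subsingleton.elim _ _
  have hρ : spectralRadius ℂ a < 1 := by
    simpa using spectralRadius_lt_of_forall_lt a (r := 1) fun z hz => by exact_mod_cast ha z hz
  obtain ⟨t, hρt, ht1⟩ := ENNReal.lt_iff_exists_nnreal_btwn.mp hρ
  have hbound : ∀ᶠ k : ℕ in atTop, ‖a ^ k‖ ≤ (t : ℝ) ^ k := by
    filter_upwards [(pow_nnnorm_pow_one_div_tendsto_nhds_spectralRadius a).eventually_lt_const hρt,
      eventually_ge_atTop 1] with k hk hk1
    rw [one_div, ENNReal.rpow_inv_lt_iff (by positivity), ENNReal.rpow_natCast] at hk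
    exact_mod_cast hk.le
  exact squeeze_zero_norm' hbound
    (tendsto_pow_atTop_nhds_zero_of_lt_one t.2 (by exact_mod_cast ht1))

end spectrum

theorem Matrix.isUnit_of_isUnit_map {ι K L : Type*} [Fintype ι] [DecidableEq ι] [Field K]
    [Field L] (f : K →+* L) {M : Matrix ι ι K} (h : IsUnit (M.map f)) : IsUnit M := by
  rw [isUnit_iff_isUnit_det, isUnit_iff_ne_zero] at h ⊢
  rw [← RingHom.mapMatrix_apply, ← RingHom.map_det] at h
  exact (map_ne_zero f).mp h

namespace Hurwitz

variable {n : ℕ} {A : Matrix (Fin n) (Fin n) ℝ}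

theorem isUnit_sub_one (hA : Hurwitz A) : IsUnit (A - 1) := by
  have h1 : (1 : ℂ) ∉ spectrum ℂ (A.map Complex.ofReal) := fun h => (hA 1 h).not_ge zero_le_one
  rw [spectrum.notMem_iff, map_one, ← neg_sub, IsUnit.neg_iff] at h1
  refine isUnit_of_isUnit_map Complex.ofRealHom ?_
  rw [← RingHom.mapMatrix_apply, map_sub, map_one]
  exact h1

theorem tendsto_pow_cayley (hA : Hurwitz A) :
    Tendsto (fun k : ℕ => ((A + 1) * (A - 1)⁻¹) ^ k) atTop (𝓝 0) := by
  let φ : Matrix (Fin n) (Fin n) ℝ →+* Matrix (Fin n) (Fin n) ℂ := Complex.ofRealHom.mapMatrix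
  have hdet := (isUnit_iff_isUnit_det _).mp hA.isUnit_sub_one
  have hright : (φ A - 1) * φ (A - 1)⁻¹ = 1 := by
    rw [← map_one φ, ← map_sub, ← map_mul, mul_nonsing_inv _ hdet]
  have hleft : φ (A - 1)⁻¹ * (φ A - 1) = 1 := by
    rw [← map_one φ, ← map_sub, ← map_mul, nonsing_inv_mul _ hdet]
  have hspec := spectrum.norm_lt_one_of_mem_cayley (a := φ A) hA hright hleft
  rw [← map_one φ, ← map_add, ← map_mul] at hspec
  have hlim := ((continuous_id.matrix_map Complex.continuous_re).tendsto 0).comp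
    (spectrum.tendsto_pow_atTop_nhds_zero_of_forall_norm_lt_one hspec)
  have hre : ∀ M : Matrix (Fin n) (Fin n) ℝ, (φ M).map Complex.re = M := fun M => by
    ext
    simp [φ]
  simpa only [Function.comp_def, id, ← map_pow, hre, Matrix.map_zero _ Complex.zero_re] using hlim

end Hurwitz

theorem Matrix.PosSemidef.of_stein {ι : Type*} [Fintype ι] [DecidableEq ι] {X S C : Matrix ι ι ℝ}
    (hX : X.IsHermitian) (hS : S.PosSemidef) (hstein : X = Cᵀ * X * C + S)
    (hC : Tendsto (fun k : ℕ => C ^ k) atTop (𝓝 0)) : X.PosSemidef := by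
  set q : (ι → ℝ) → ℝ := fun v => v ⬝ᵥ X *ᵥ v
  have hstep : ∀ v, q (C *ᵥ v) ≤ q v := fun v => by
    have hSv := hS.dotProduct_mulVec_nonneg v
    rw [star_trivial] at hSv
    have hsplit : q v = q (C *ᵥ v) + v ⬝ᵥ S *ᵥ v := by
      conv_lhs => simp only [q]; rw [hstein]
      rw [add_mulVec, dotProduct_add, ← mulVec_mulVec, ← mulVec_mulVec, dotProduct_mulVec,
        vecMul_transpose]
    linarith
  have hiter : ∀ k v, q ((C ^ k) *ᵥ v) ≤ q v := by
    intro k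
    induction k with
    | zero => simp
    | succ k ih => exact fun v => by rw [pow_succ, ← mulVec_mulVec]; exact (ih _).trans (hstep v)
  refine .of_dotProduct_mulVec_nonneg hX fun v => ?_
  have hcont : Continuous fun M : Matrix ι ι ℝ => q (M *ᵥ v) := by fun_prop
  have hlim : Tendsto (fun k => q ((C ^ k) *ᵥ v)) atTop (𝓝 0) := by
    simpa [q, Function.comp_def] using (hcont.tendsto 0).comp hC
  rw [star_trivial]
  exact le_of_tendsto' hlim fun k => hiter k v

theorem Hurwitz.posSemidef_of_lyapunov {n : ℕ} {A X S : Matrix (Fin n) (Fin n) ℝ}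
    (hA : Hurwitz A) (hX : X.IsHermitian) (hS : S.PosSemidef)
    (hlyap : Aᵀ * X + X * A + S = 0) : X.PosSemidef := by
  have hdet := (isUnit_iff_isUnit_det _).mp hA.isUnit_sub_one
  have hconj : (A - 1)ᵀ * X * (A - 1) = (A + 1)ᵀ * X * (A + 1) + (S + S) := by
    simp only [transpose_sub, transpose_add, transpose_one]
    linear_combination (norm := noncomm_ring) (-2 : ℤ) • hlyap
  refine .of_stein hX (by simpa using (hS.add hS).conjTranspose_mul_mul_same (A - 1)⁻¹) ?_
    hA.tendsto_pow_cayley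
  generalize A - 1 = E at hdet hconj ⊢
  have hinv : (E⁻¹)ᵀ * Eᵀ = 1 := by rw [← transpose_mul, mul_nonsing_inv _ hdet, transpose_one]
  calc X = (E⁻¹)ᵀ * Eᵀ * X * (E * E⁻¹) := by rw [hinv, mul_nonsing_inv _ hdet, one_mul, mul_one]
    _ = (E⁻¹)ᵀ * (Eᵀ * X * E) * E⁻¹ := by noncomm_ring
    _ = _ := by rw [hconj, transpose_mul]; noncomm_ring

namespace Matrix

variable {ι : Type*} [Fintype ι]

open scoped MatrixOrder in
theorem PosSemidef.exists_eq_transpose_mul_self [DecidableEq ι] {X : Matrix ι ι ℝ}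
    (hX : X.PosSemidef) : ∃ B : Matrix ι ι ℝ, X = Bᵀ * B := by
  refine ⟨CFC.sqrt X, ?_⟩
  rw [← conjTranspose_eq_transpose_of_trivial, (CFC.sqrt_nonneg X).posSemidef.isHermitian.eq,
    CFC.sqrt_mul_sqrt_self X hX.nonneg]

theorem trace_transpose_mul_self {κ : Type*} [Fintype κ] (B : Matrix κ ι ℝ) :
    (Bᵀ * B).trace = ∑ i, B i ⬝ᵥ B i := by
  simp only [trace, diag, mul_apply, transpose_apply, dotProduct]
  exact Finset.sum_comm

theorem trace_mul_transpose_mul_self {κ : Type*} [Fintype κ] (Y : Matrix ι ι ℝ)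
    (B : Matrix κ ι ℝ) : (Y * (Bᵀ * B)).trace = ∑ i, B i ⬝ᵥ Y *ᵥ B i := by
  rw [← Matrix.mul_assoc, trace_mul_comm]
  rfl

theorem PosSemidef.trace_mul_le_of_forall_dotProduct_mulVec_le [DecidableEq ι]
    {X Y : Matrix ι ι ℝ} {c : ℝ} (hX : X.PosSemidef) (hY : ∀ v, v ⬝ᵥ Y *ᵥ v ≤ c * (v ⬝ᵥ v)) :
    (Y * X).trace ≤ c * X.trace := by
  obtain ⟨B, rfl⟩ := hX.exists_eq_transpose_mul_self
  rw [trace_mul_transpose_mul_self, trace_transpose_mul_self, Finset.mul_sum]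
  exact Finset.sum_le_sum fun i _ => hY (B i)

theorem dotProduct_mulVec_le_l2_opNorm_mul [DecidableEq ι] (Y : Matrix ι ι ℝ) (v : ι → ℝ) :
    v ⬝ᵥ Y *ᵥ v ≤ ‖Y‖ * (v ⬝ᵥ v) := by
  have hinner : ∀ w, v ⬝ᵥ w = inner ℝ (WithLp.toLp 2 v) (WithLp.toLp 2 w) := fun w => by
    rw [EuclideanSpace.inner_toLp_toLp, star_trivial, dotProduct_comm]
  rw [hinner, hinner, real_inner_self_eq_norm_sq]
  calc _ ≤ ‖WithLp.toLp 2 v‖ * ‖WithLp.toLp 2 (Y *ᵥ v)‖ := real_inner_le_norm _ _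
    _ ≤ ‖WithLp.toLp 2 v‖ * (‖Y‖ * ‖WithLp.toLp 2 v‖) :=
      mul_le_mul_of_nonneg_left (Y.l2_opNorm_mulVec (WithLp.toLp 2 v)) (norm_nonneg _)
    _ = _ := by ring

theorem PosSemidef.dotProduct_mulVec_le_trace_mul [DecidableEq ι] {P : Matrix ι ι ℝ}
    (hP : P.PosSemidef) (v : ι → ℝ) : v ⬝ᵥ P *ᵥ v ≤ P.trace * (v ⬝ᵥ v) := by
  obtain ⟨B, rfl⟩ := hP.exists_eq_transpose_mul_self
  rw [← mulVec_mulVec, dotProduct_mulVec, vecMul_transpose, trace_transpose_mul_self,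
    Finset.sum_mul]
  refine Finset.sum_le_sum fun i _ => ?_
  have hcs := real_inner_mul_inner_self_le (WithLp.toLp 2 v) (WithLp.toLp 2 (B i))
  simp only [EuclideanSpace.inner_toLp_toLp, star_trivial] at hcs
  rw [mul_comm (B i ⬝ᵥ B i)]
  exact hcs

theorem PosSemidef.trace_mul_mul_mul_le [DecidableEq ι] {Δ M P : Matrix ι ι ℝ}
    (hΔ : Δ.PosSemidef) (hM : M.PosSemidef) (hPΔ : (P - Δ).PosSemidef) (Y : Matrix ι ι ℝ) :
    (Δ * M * Δ * Y).trace ≤ ‖Y‖ * ‖M‖ * P.trace * Δ.trace := by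
  have hP : P.PosSemidef := by simpa using hPΔ.add hΔ
  have hΔt : Δᵀ = Δ := (isHermitian_iff_isSymm.mp hΔ.isHermitian).eq
  have hΔsq : (Δ * Δ).PosSemidef := by
    simpa [hΔt] using posSemidef_conjTranspose_mul_self Δ
  have hΔMΔ : (Δ * M * Δ).PosSemidef := by
    simpa [hΔt] using hM.conjTranspose_mul_mul_same Δ
  have hsq : (Δ * Δ).trace ≤ P.trace * Δ.trace := by
    refine hΔ.trace_mul_le_of_forall_dotProduct_mulVec_le fun v => ?_
    have hPv := hPΔ.dotProduct_mulVec_nonneg v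
    rw [star_trivial, sub_mulVec, dotProduct_sub, sub_nonneg] at hPv
    exact hPv.trans (hP.dotProduct_mulVec_le_trace_mul v)
  calc (Δ * M * Δ * Y).trace = (Y * (Δ * M * Δ)).trace := trace_mul_comm _ _
    _ ≤ ‖Y‖ * (Δ * M * Δ).trace :=
      hΔMΔ.trace_mul_le_of_forall_dotProduct_mulVec_le (dotProduct_mulVec_le_l2_opNorm_mul Y)
    _ = ‖Y‖ * (M * (Δ * Δ)).trace := by
      rw [Matrix.mul_assoc, trace_mul_comm, Matrix.mul_assoc]
    _ ≤ ‖Y‖ * (‖M‖ * (P.trace * Δ.trace)) := by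
      gcongr
      exact (hΔsq.trace_mul_le_of_forall_dotProduct_mulVec_le
        (dotProduct_mulVec_le_l2_opNorm_mul M)).trans (by gcongr)
    _ = _ := by ring

theorem trace_transpose_mul_add_mul_mul (F Δ Y : Matrix ι ι ℝ) :
    ((Fᵀ * Δ + Δ * F) * Y).trace = (Δ * (F * Y + Y * Fᵀ)).trace := by
  rw [Matrix.add_mul, Matrix.mul_add, trace_add, trace_add, add_comm, Matrix.mul_assoc,
    Matrix.mul_assoc, trace_mul_comm Fᵀ, Matrix.mul_assoc]

end Matrix

section Riccati

variable {ι κ : Type*} [Fintype ι] [Fintype κ] [DecidableEq κ]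
  {A P Ps Q : Matrix ι ι ℝ} {B : Matrix ι κ ℝ} {R : Matrix κ κ ℝ} {K : Matrix κ ι ℝ}

theorem transpose_sub_inv_mul_mul_sub (hR : R.IsSymm) (hRdet : IsUnit R.det) (hP : P.IsSymm) :
    (K - R⁻¹ * Bᵀ * P)ᵀ * R * (K - R⁻¹ * Bᵀ * P) =
      Kᵀ * R * K - Kᵀ * Bᵀ * P - P * B * K + P * (B * R⁻¹ * Bᵀ) * P := by
  have hRinv : (R⁻¹)ᵀ = R⁻¹ := by rw [transpose_nonsing_inv, hR.eq]
  simp only [transpose_sub, transpose_mul, transpose_transpose, hRinv, hP.eq, Matrix.sub_mul,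
    Matrix.mul_sub, Matrix.mul_assoc, mul_nonsing_inv_cancel_left R _ hRdet,
    nonsing_inv_mul_cancel_left R _ hRdet]
  abel

theorem lyapunov_sub_riccati (hR : R.IsSymm) (hRdet : IsUnit R.det) (hPs : Ps.IsSymm)
    (hARE : Aᵀ * Ps + Ps * A + Q - Ps * B * R⁻¹ * Bᵀ * Ps = 0)
    (hlyap : (A - B * K)ᵀ * P + P * (A - B * K) + Q + Kᵀ * R * K = 0) :
    (A - B * K)ᵀ * (P - Ps) + (P - Ps) * (A - B * K) +
      (K - R⁻¹ * Bᵀ * Ps)ᵀ * R * (K - R⁻¹ * Bᵀ * Ps) = 0 := by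
  rw [transpose_sub_inv_mul_mul_sub hR hRdet hPs]
  simp only [transpose_sub, transpose_mul, Matrix.sub_mul, Matrix.mul_sub, Matrix.mul_assoc]
    at hARE hlyap ⊢
  linear_combination (norm := abel) hlyap - hARE

theorem transpose_sub_gaussNewton_mul_mul_sub (hR : R.IsSymm) (hRdet : IsUnit R.det)
    (hPs : Ps.IsSymm) (hP : P.IsSymm)
    (hARE : Aᵀ * Ps + Ps * A + Q - Ps * B * R⁻¹ * Bᵀ * Ps = 0)
    (hlyap : (A - B * K)ᵀ * P + P * (A - B * K) + Q + Kᵀ * R * K = 0) :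
    (K - R⁻¹ * Bᵀ * P)ᵀ * R * (K - R⁻¹ * Bᵀ * P) =
      (P - Ps) * (B * R⁻¹ * Bᵀ) * (P - Ps) -
        ((A - B * (R⁻¹ * Bᵀ * Ps))ᵀ * (P - Ps) + (P - Ps) * (A - B * (R⁻¹ * Bᵀ * Ps))) := by
  have hRinv : (R⁻¹)ᵀ = R⁻¹ := by rw [transpose_nonsing_inv, hR.eq]
  rw [transpose_sub_inv_mul_mul_sub hR hRdet hP]
  simp only [transpose_sub, transpose_mul, transpose_transpose, hRinv, hPs.eq, Matrix.sub_mul,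
    Matrix.mul_sub, Matrix.mul_assoc] at hARE hlyap ⊢
  linear_combination (norm := abel) hlyap - hARE

end Riccati

theorem gauss_newton_trace_bound_general {n m : ℕ}
    (A : Matrix (Fin n) (Fin n) ℝ) (B : Matrix (Fin n) (Fin m) ℝ)
    (Q : Matrix (Fin n) (Fin n) ℝ) (R : Matrix (Fin m) (Fin m) ℝ)
    (hR : R.PosDef)
    (Ps : Matrix (Fin n) (Fin n) ℝ) (hPs : Ps.PosDef)
    (hARE : Aᵀ * Ps + Ps * A + Q - Ps * B * R⁻¹ * Bᵀ * Ps = 0)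
    (Ks : Matrix (Fin m) (Fin n) ℝ) (hKs : Ks = R⁻¹ * Bᵀ * Ps)
    (Ys : Matrix (Fin n) (Fin n) ℝ)
    (hYseq : (A - B * Ks) * Ys + Ys * (A - B * Ks)ᵀ + 1 = 0)
    (K : Matrix (Fin m) (Fin n) ℝ) (hK : Hurwitz (A - B * K))
    (PK : Matrix (Fin n) (Fin n) ℝ) (hPK : PK.PosDef)
    (hPKeq : (A - B * K)ᵀ * PK + PK * (A - B * K) + Q + Kᵀ * R * K = 0) :
    ((K - R⁻¹ * Bᵀ * PK) * Ys * (R * (K - R⁻¹ * Bᵀ * PK))ᵀ).trace ≤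
      (1 + ‖Ys‖ * ‖B * R⁻¹ * Bᵀ‖ * PK.trace) * (PK - Ps).trace := by
  subst hKs
  have hRs : R.IsSymm := isHermitian_iff_isSymm.mp hR.isHermitian
  have hRdet : IsUnit R.det := (isUnit_iff_isUnit_det R).mp hR.isUnit
  have hPss : Ps.IsSymm := isHermitian_iff_isSymm.mp hPs.isHermitian
  have hPKs : PK.IsSymm := isHermitian_iff_isSymm.mp hPK.isHermitian
  have hΔ : (PK - Ps).PosSemidef :=
    hK.posSemidef_of_lyapunov (hPK.isHermitian.sub hPs.isHermitian)
      (by simpa using hR.posSemidef.conjTranspose_mul_mul_same (K - R⁻¹ * Bᵀ * Ps))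
      (lyapunov_sub_riccati hRs hRdet hPss hARE hPKeq)
  have hM : (B * R⁻¹ * Bᵀ).PosSemidef := by
    simpa using hR.inv.posSemidef.mul_mul_conjTranspose_same B
  have hYs := eq_neg_of_add_eq_zero_left hYseq
  have hbound := hΔ.trace_mul_mul_mul_le (P := PK) hM (by simpa using hPs.posSemidef) Ys
  rw [transpose_mul, hRs.eq, trace_mul_comm, ← Matrix.mul_assoc,
    transpose_sub_gaussNewton_mul_mul_sub hRs hRdet hPss hPKs hARE hPKeq, Matrix.sub_mul,
    trace_sub, trace_transpose_mul_add_mul_mul, hYs, mul_neg, mul_one, trace_neg]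
  linarith

/-- For any stabilizing gain `K`, with `K₊ = R⁻¹BᵀP_K`, the bound
`⟨K−K₊, R(K−K₊)⟩_{Y*} ≤ (1 + ‖Y*‖·‖BR⁻¹Bᵀ‖·Tr(P_K))·Tr(P_K − P*)` holds,
where `⟨M,N⟩_{Y*} = Tr(M Y* Nᵀ)` and `‖·‖` is the spectral norm. -/
theorem gauss_newton_trace_bound {n m : ℕ}
    (A : Matrix (Fin n) (Fin n) ℝ) (B : Matrix (Fin n) (Fin m) ℝ)
    (Q : Matrix (Fin n) (Fin n) ℝ) (R : Matrix (Fin m) (Fin m) ℝ)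
    (hQ : Q.PosDef) (hR : R.PosDef)
    (Ps : Matrix (Fin n) (Fin n) ℝ) (hPs : Ps.PosDef)
    (hARE : Aᵀ * Ps + Ps * A + Q - Ps * B * R⁻¹ * Bᵀ * Ps = 0)
    (Ks : Matrix (Fin m) (Fin n) ℝ) (hKs : Ks = R⁻¹ * Bᵀ * Ps)
    (hKsHur : Hurwitz (A - B * Ks))
    (Ys : Matrix (Fin n) (Fin n) ℝ) (hYs : Ys.PosDef)
    (hYseq : (A - B * Ks) * Ys + Ys * (A - B * Ks)ᵀ + 1 = 0)
    (K : Matrix (Fin m) (Fin n) ℝ) (hK : Hurwitz (A - B * K))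
    (PK : Matrix (Fin n) (Fin n) ℝ) (hPK : PK.PosDef)
    (hPKeq : (A - B * K)ᵀ * PK + PK * (A - B * K) + Q + Kᵀ * R * K = 0) :
    ((K - R⁻¹ * Bᵀ * PK) * Ys * (R * (K - R⁻¹ * Bᵀ * PK))ᵀ).trace ≤
      (1 + ‖Ys‖ * ‖B * R⁻¹ * Bᵀ‖ * PK.trace) * (PK - Ps).trace :=
  gauss_newton_trace_bound_general A B Q R hR Ps hPs hARE Ks hKs Ys hYseq K hK PK hPK hPKeq
end

section
/- Consider the scalar LQR example A=0, B=Q=R=1, so 𝒢=(0,∞), 𝒥₂(K) = (K²+1)/(2K), K*=1. Under the natural gradient descent update K' = K − η(K²−1)/K with 0 < η < 1, it holds that 𝒥₂(K') − 𝒥₂(K) = −η·m(K,η)·(𝒥₂(K) − 𝒥₂(K*)) where m(K,η) = (1−η)(K+1)²/((1−η)K² + η), and m(K,η) → 1 as K → ∞. -/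
/-!
Writing `D = (1 - η) K² + η`, the update is `K' = D / K`, which is positive because `D` is a
convex combination of `K²` and `1`. With `𝒥₂(K) = (K + K⁻¹) / 2` one gets
`𝒥₂(D / K) - 𝒥₂(K) = (D - K²)(D - 1) / (2 D K)`, and `D - K² = -η (K² - 1)`,
`D - 1 = (1 - η)(K² - 1)`, while `𝒥₂(K) - 1 = (K - 1)² / (2 K)`. As `K → ∞` both numerator and
denominator of `m(K, η)` are `(1 - η) K² + O(K)`.
-/

open Filter Topology

namespace ScalarLQR

noncomputable section

def cost (K : ℝ) : ℝ := (K ^ 2 + 1) / (2 * K)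

def naturalGradientStep (η K : ℝ) : ℝ := K - η * (K ^ 2 - 1) / K

def contractionFactor (η K : ℝ) : ℝ := (1 - η) * (K + 1) ^ 2 / ((1 - η) * K ^ 2 + η)

lemma naturalGradientStep_eq {K : ℝ} (hK : K ≠ 0) (η : ℝ) :
    naturalGradientStep η K = ((1 - η) * K ^ 2 + η) / K := by
  unfold naturalGradientStep
  field_simp
  ring

lemma one_sub_mul_sq_add_pos {η : ℝ} (hη0 : 0 < η) (hη1 : η ≤ 1) (K : ℝ) :
    0 < (1 - η) * K ^ 2 + η := by
  have : 0 ≤ 1 - η := by linarith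
  positivity

lemma naturalGradientStep_pos {η K : ℝ} (hη0 : 0 < η) (hη1 : η ≤ 1) (hK : 0 < K) :
    0 < naturalGradientStep η K := by
  rw [naturalGradientStep_eq hK.ne']
  exact div_pos (one_sub_mul_sq_add_pos hη0 hη1 K) hK

lemma cost_div_sub_cost {D K : ℝ} (hK : K ≠ 0) (hD : D ≠ 0) :
    cost (D / K) - cost K = (D - K ^ 2) * (D - 1) / (2 * D * K) := by
  unfold cost
  field_simp
  ring

lemma cost_sub_one {K : ℝ} (hK : K ≠ 0) : cost K - 1 = (K - 1) ^ 2 / (2 * K) := by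
  unfold cost
  field_simp
  ring

theorem cost_naturalGradientStep_sub_cost {η K : ℝ} (hK : K ≠ 0)
    (hD : (1 - η) * K ^ 2 + η ≠ 0) :
    cost (naturalGradientStep η K) - cost K = -η * contractionFactor η K * (cost K - 1) := by
  rw [naturalGradientStep_eq hK, cost_div_sub_cost hK hD, cost_sub_one hK, contractionFactor]
  field_simp
  ring

lemma tendsto_mul_add_one_sq_div {a : ℝ} (ha : a ≠ 0) (b : ℝ) :
    Tendsto (fun K : ℝ => a * (K + 1) ^ 2 / (a * K ^ 2 + b)) atTop (𝓝 1) := by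
  have hinv : Tendsto (fun K : ℝ => K⁻¹) atTop (𝓝 0) := tendsto_inv_atTop_zero
  have hlim : Tendsto (fun K : ℝ => a * (1 + K⁻¹) ^ 2 / (a + b * K⁻¹ ^ 2)) atTop
      (𝓝 (a * (1 + 0) ^ 2 / (a + b * 0 ^ 2))) :=
    (((tendsto_const_nhds.add hinv).pow 2).const_mul a).div
      (tendsto_const_nhds.add ((hinv.pow 2).const_mul b)) (by simpa using ha)
  rw [show a * (1 + 0) ^ 2 / (a + b * 0 ^ 2) = 1 by simp [ha]] at hlim
  refine hlim.congr' ?_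
  filter_upwards [eventually_ne_atTop 0] with K hK
  -- divide numerator and denominator by `K²`
  rw [← mul_div_mul_right _ _ (pow_ne_zero 2 hK)]
  field_simp

theorem tendsto_contractionFactor {η : ℝ} (hη1 : η ≠ 1) :
    Tendsto (contractionFactor η) atTop (𝓝 1) :=
  tendsto_mul_add_one_sq_div (sub_ne_zero.mpr hη1.symm) η

end

end ScalarLQR

open ScalarLQR in
/-- Scalar LQR example (`A = 0`, `B = Q = R = 1`, `𝒥₂(K) = (K²+1)/(2K)`, `K* = 1`):
under the natural gradient update `K' = K − η(K²−1)/K` with `0 < η < 1`, the iterate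
stays in `𝒢 = (0,∞)` and
`𝒥₂(K') − 𝒥₂(K) = −η·m(K,η)·(𝒥₂(K) − 𝒥₂(K*))` with
`m(K,η) = (1−η)(K+1)²/((1−η)K² + η)`; moreover `m(K,η) → 1` as `K → ∞`. -/
theorem scalar_natural_gradient_descent (η : ℝ) (hη0 : 0 < η) (hη1 : η < 1) :
    (∀ K : ℝ, 0 < K →
      0 < K - η * (K ^ 2 - 1) / K ∧
      ((K - η * (K ^ 2 - 1) / K) ^ 2 + 1) / (2 * (K - η * (K ^ 2 - 1) / K))
          - (K ^ 2 + 1) / (2 * K) =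
        -η * ((1 - η) * (K + 1) ^ 2 / ((1 - η) * K ^ 2 + η))
          * ((K ^ 2 + 1) / (2 * K) - 1)) ∧
    Filter.Tendsto (fun K : ℝ => (1 - η) * (K + 1) ^ 2 / ((1 - η) * K ^ 2 + η))
      Filter.atTop (nhds 1) :=
  ⟨fun _ hK => ⟨naturalGradientStep_pos hη0 hη1.le hK,
      cost_naturalGradientStep_sub_cost hK.ne' (one_sub_mul_sq_add_pos hη0 hη1.le _).ne'⟩,
    tendsto_contractionFactor hη1.ne⟩
end
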